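/- arXiv:1206.6027 — 2 statements merged into one kernel-verified Lean document; each statement's English description precedes it below -/
import Mathlib

section
/- Let I be any two-sided ideal of F and let G be any Gröbner basis of I with respect to the graded right lexicographic ordering. Then G^* = {g^* : g ∈ G, g ≠ 0} is a homogeneous Gröbner basis of the homogenization I^* modulo C, i.e. G^* ∪ {[t, x_i] : i ≥ 1} is a Gröbner basis of I^* with respect to the graded right lexicographic ordering of F̄ with t smallest; moreover lm(G^*) = lm(G). -/
noncomputable section

/-! ### Common definitions for the letterplace correspondence (La Scala)

`FA K Y` is the free associative algebra `K⟨Y⟩` (monoid algebra of the free monoid on `Y`);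
`PL K Y` is the letterplace polynomial algebra `K[y(j) : y ∈ Y, j ∈ ℕ*]`.
The algebra `F̄ = K⟨X ∪ {t}⟩` is modeled as `FA K (Option X)` with `t = none`,
and similarly `P̄ = PL K (Option X)`. -/

/-- The free associative algebra `K⟨Y⟩`. -/
abbrev FA (K : Type*) [CommSemiring K] (Y : Type*) := MonoidAlgebra K (FreeMonoid Y)

/-- The letterplace polynomial algebra `K[y(j)]`, with places in `ℕ* = ℕ+`. -/
abbrev PL (K : Type*) [CommSemiring K] (Y : Type*) := MvPolynomial (Y × ℕ+) K

variable (K : Type*) [Field K]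

/-- The generator of `K⟨Y⟩` corresponding to a letter. -/
def gen {Y : Type*} (y : Y) : FA K Y := MonoidAlgebra.of K (FreeMonoid Y) (FreeMonoid.of y)

/-- The extra letter `t` of `F̄ = K⟨X ∪ {t}⟩`. -/
def tv {X : Type*} : FA K (Option X) := gen K (none : Option X)

/-- `φ : F̄ → F̄`, the algebra endomorphism with `φ(x_i) = x_i`, `φ(t) = 1`. -/
def phi {X : Type*} : FA K (Option X) →ₐ[K] FA K (Option X) :=
  (MonoidAlgebra.lift K (FA K (Option X)) (FreeMonoid (Option X)))
    (FreeMonoid.lift fun o => Option.elim o 1 (fun x => gen K (some x)))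

/-- `f` is homogeneous of degree `d` (all words in its support have length `d`). -/
def IsHomog {Y : Type*} (d : ℕ) (f : FA K Y) : Prop :=
  ∀ w ∈ f.coeff.support, FreeMonoid.length w = d

/-- The homogeneous component of degree `d` of `f ∈ K⟨Y⟩`. -/
def homComp {Y : Type*} (d : ℕ) (f : FA K Y) : FA K Y :=
  ∑ w ∈ f.coeff.support.filter (fun w => FreeMonoid.length w = d), MonoidAlgebra.single w (f.coeff w)

/-- A two-sided ideal is graded (for the grading by total degree) iff it contains all
homogeneous components of its elements. -/
def IsGradedF {Y : Type*} (I : TwoSidedIdeal (FA K Y)) : Prop := ∀ f ∈ I, ∀ d, homComp K d f ∈ I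

/-- `C ⊆ F̄`: the two-sided ideal generated by all homogeneous elements of `ker φ`,
i.e. the largest graded ideal contained in `ker φ`. -/
def Cideal {X : Type*} : TwoSidedIdeal (FA K (Option X)) :=
  TwoSidedIdeal.span {f | (∃ d, IsHomog K d f) ∧ phi K f = 0}

/-- The embedding of free monoids `X* → (X ∪ {t})*`. -/
def embWord {X : Type*} : FreeMonoid X →* FreeMonoid (Option X) := FreeMonoid.map some

/-- The canonical embedding `F = K⟨X⟩ → F̄ = K⟨X ∪ {t}⟩`. -/
def emb {X : Type*} : FA K X →ₐ[K] FA K (Option X) :=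
  (MonoidAlgebra.lift K (FA K (Option X)) (FreeMonoid X))
    ((MonoidAlgebra.of K (FreeMonoid (Option X))).comp embWord)

/-- The top degree `deg(f)` of `f` (max length of a word in the support). -/
def degF {Y : Type*} (f : FA K Y) : ℕ := f.coeff.support.sup FreeMonoid.length

/-- The homogenization `f^* = Σ_k f_k t^{deg f − k} ∈ F̄` of `f ∈ F`. -/
def hstar {X : Type*} (f : FA K X) : FA K (Option X) :=
  ∑ w ∈ f.coeff.support,
    MonoidAlgebra.single
      (embWord w * (FreeMonoid.of (none : Option X)) ^ (degF K f - FreeMonoid.length w)) (f.coeff w)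

/-- Homogenization of an element already written in `F̄` (used for elements of `φ(F̄) = F`). -/
def hstarO {X : Type*} (f : FA K (Option X)) : FA K (Option X) :=
  ∑ w ∈ f.coeff.support,
    MonoidAlgebra.single
      (w * (FreeMonoid.of (none : Option X)) ^ (degF K f - FreeMonoid.length w)) (f.coeff w)

/-- The homogenization `I^*` of an ideal `I ⊆ F`: the two-sided ideal of `F̄` generated by all
homogeneous elements of `φ⁻¹(I)` (identifying `F` with its image in `F̄`). -/
def hstarIdeal {X : Type*} (I : TwoSidedIdeal (FA K X)) : TwoSidedIdeal (FA K (Option X)) :=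
  TwoSidedIdeal.span {g | (∃ d, IsHomog K d g) ∧ ∃ f ∈ I, phi K g = emb K f}

/-- The saturation `Sat(J) = φ(J)^*` of a graded ideal `C ⊆ J ⊆ F̄`: the two-sided ideal
generated by all homogeneous elements `g` with `φ(g) ∈ φ(J)`. -/
def SatF {X : Type*} (J : TwoSidedIdeal (FA K (Option X))) : TwoSidedIdeal (FA K (Option X)) :=
  TwoSidedIdeal.span {g | (∃ d, IsHomog K d g) ∧ ∃ h ∈ J, phi K g = phi K h}

/-! ### The commutative (letterplace) side -/

/-- The shift of letterplace variables: `k · y(j) = y(j + k)`. -/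
def shiftVar {Y : Type*} (k : ℕ) (p : Y × ℕ+) : Y × ℕ+ :=
  (p.1, ⟨p.2 + k, Nat.add_pos_left p.2.2 k⟩)

/-- The action of `k ∈ ℕ` on the letterplace algebra. -/
def shift {Y : Type*} (k : ℕ) : PL K Y →ₐ[K] PL K Y := MvPolynomial.rename (shiftVar k)

/-- An ideal of `PL K Y` is an ℕ-ideal if it is stable under all shifts. -/
def IsNIdeal {Y : Type*} (I : Ideal (PL K Y)) : Prop := ∀ k, ∀ f ∈ I, shift K k f ∈ I

/-- The ℕ-ideal `⟨S⟩_ℕ` generated by a set `S`. -/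
def nspan {Y : Type*} (S : Set (PL K Y)) : Ideal (PL K Y) :=
  Ideal.span {g | ∃ k, ∃ f ∈ S, g = shift K k f}

/-- The place multidegree `∂(m)` of a monomial. -/
def placeDeg {Y : Type*} (m : (Y × ℕ+) →₀ ℕ) : ℕ+ →₀ ℕ := Finsupp.mapDomain Prod.snd m

/-- `f` is multihomogeneous of place multidegree `μ`. -/
def IsMultiHomog {Y : Type*} (μ : ℕ+ →₀ ℕ) (f : PL K Y) : Prop :=
  ∀ m ∈ f.support, placeDeg m = μ

/-- The multihomogeneous component of multidegree `μ` of `f`. -/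
def mComp {Y : Type*} (μ : ℕ+ →₀ ℕ) (f : PL K Y) : PL K Y :=
  ∑ m ∈ f.support.filter (fun m => placeDeg m = μ),
    MvPolynomial.monomial m (MvPolynomial.coeff m f)

/-- An ideal is multigraded iff it contains all multihomogeneous components of its elements. -/
def IsMultiGraded {Y : Type*} (I : Ideal (PL K Y)) : Prop := ∀ f ∈ I, ∀ μ, mComp K μ f ∈ I

/-- `ψ : P̄ → P̄`, with `ψ(x_i(j)) = x_i(j)` and `ψ(t(j)) = 1`. -/
def psi {X : Type*} : PL K (Option X) →ₐ[K] PL K (Option X) :=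
  MvPolynomial.aeval (fun p => Option.elim p.1 1 (fun x => MvPolynomial.X (some x, p.2)))

/-- The canonical embedding `P → P̄`. -/
def embP {X : Type*} : PL K X →ₐ[K] PL K (Option X) :=
  MvPolynomial.rename (fun p => (some p.1, p.2))

/-- The top multidegree `∂(f)` of `f` (componentwise max over the support). -/
def topDeg {Y : Type*} (f : PL K Y) : ℕ+ →₀ ℕ := f.support.sup placeDeg

/-- The pure-`t` monomial `∏_k t(k)^{ν_k}` with exponents `ν`. -/
def tExp {X : Type*} (ν : ℕ+ →₀ ℕ) : ((Option X) × ℕ+) →₀ ℕ :=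
  Finsupp.mapDomain (fun k => ((none : Option X), k)) ν

/-- The multihomogenization `f^* = Σ_μ f_μ ∏_k t(k)^{ν_k − μ_k} ∈ P̄` of `f ∈ P`. -/
def mhstar {X : Type*} (f : PL K X) : PL K (Option X) :=
  ∑ m ∈ f.support,
    MvPolynomial.monomial
      (Finsupp.mapDomain (fun p => ((some p.1 : Option X), p.2)) m +
        tExp (topDeg K f - placeDeg m))
      (MvPolynomial.coeff m f)

/-- Multihomogenization of an element already written in `P̄` (used for elements of `ψ(P̄) = P`). -/
def mhstarO {X : Type*} (f : PL K (Option X)) : PL K (Option X) :=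
  ∑ m ∈ f.support,
    MvPolynomial.monomial (m + tExp (topDeg K f - placeDeg m)) (MvPolynomial.coeff m f)

/-- The multihomogenization `I^*` of an ℕ-ideal `I ⊆ P`: the ℕ-ideal of `P̄` generated by all
multihomogeneous elements of `ψ⁻¹(I)` (identifying `P` with its image in `P̄`). -/
def mhstarIdeal {X : Type*} (I : Ideal (PL K X)) : Ideal (PL K (Option X)) :=
  nspan K {g | (∃ μ, IsMultiHomog K μ g) ∧ ∃ f ∈ I, psi K g = embP K f}

/-- The saturation `Sat(J) = ψ(J)^*` of a multigraded ℕ-ideal `J ⊆ P̄`. -/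
def SatP {X : Type*} (J : Ideal (PL K (Option X))) : Ideal (PL K (Option X)) :=
  nspan K {g | (∃ μ, IsMultiHomog K μ g) ∧ ∃ h ∈ J, psi K g = psi K h}

/-! ### The letterplace embedding -/

/-- Exponent vector of the letterplace monomial `y_1(n+1) y_2(n+2) ⋯` of a word. -/
def wordExpAux {Y : Type*} : ℕ → List Y → ((Y × ℕ+) →₀ ℕ)
  | _, [] => 0
  | n, y :: w => Finsupp.single (y, ⟨n + 1, n.succ_pos⟩) 1 + wordExpAux (n + 1) w

/-- The letterplace monomial `y_1(1) y_2(2) ⋯ y_d(d)` of a word `y_1 y_2 ⋯ y_d`. -/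
def wordExp {Y : Type*} (w : FreeMonoid Y) : (Y × ℕ+) →₀ ℕ := wordExpAux 0 (FreeMonoid.toList w)

/-- The letterplace embedding `ι : K⟨Y⟩ → PL K Y` (a `K`-linear map). -/
def iota {Y : Type*} (f : FA K Y) : PL K Y :=
  Finsupp.sum f.coeff fun w c => MvPolynomial.monomial (wordExp w) c

/-- The set `L` of multilinear elements of `PL K Y`: multihomogeneous elements of `V = Im ι`. -/
def Lset {Y : Type*} : Set (PL K Y) :=
  {f | f ∈ Set.range (iota K (Y := Y)) ∧ ∃ μ, IsMultiHomog K μ f}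

/-- A letterplace ideal (`L`-ideal): an ℕ-ideal ℕ-generated by its multilinear elements. -/
def IsLPIdeal {Y : Type*} (J : Ideal (PL K Y)) : Prop :=
  IsNIdeal K J ∧ J = nspan K ((J : Set (PL K Y)) ∩ Lset K)

/-- The generators `x_i(1)t(2) − t(1)x_i(2)` of `D`. -/
def Dgens (X : Type*) : Set (PL K (Option X)) :=
  {g | ∃ x : X,
    g = MvPolynomial.X ((some x : Option X), (1 : ℕ+)) *
          MvPolynomial.X ((none : Option X), (2 : ℕ+)) -
        MvPolynomial.X ((none : Option X), (1 : ℕ+)) *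
          MvPolynomial.X ((some x : Option X), (2 : ℕ+))}

/-- The generators `ῑ([t, x_i]) = t(1)x_i(2) − x_i(1)t(2)` of `D`. -/
def DgensT (X : Type*) : Set (PL K (Option X)) :=
  {g | ∃ x : X,
    g = MvPolynomial.X ((none : Option X), (1 : ℕ+)) *
          MvPolynomial.X ((some x : Option X), (2 : ℕ+)) -
        MvPolynomial.X ((some x : Option X), (1 : ℕ+)) *
          MvPolynomial.X ((none : Option X), (2 : ℕ+))}

/-- `D ⊆ P̄`: the letterplace analogue of `C`. -/
def Did (X : Type*) : Ideal (PL K (Option X)) := nspan K (Dgens K X)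

/-- The product `∏_{d < k ≤ d'} t(k)`. -/
def tProd (X : Type*) (d d' : ℕ) : PL K (Option X) :=
  ∏ k ∈ Finset.range (d' - d), MvPolynomial.X ((none : Option X), ⟨d + k + 1, Nat.succ_pos _⟩)

/-- The `L`-saturation `Sat_L(J)` of a letterplace ideal `D ⊆ J ⊆ P̄`. -/
def SatL {X : Type*} (J : Ideal (PL K (Option X))) : Ideal (PL K (Option X)) :=
  nspan K {f | f ∈ Lset K ∧ ∃ d', MvPolynomial.totalDegree f ≤ d' ∧
    tProd K X (MvPolynomial.totalDegree f) d' * f ∈ J}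

/-- `J` is `L`-saturated: `t(d+1)·f ∈ J` with `f` multilinear of degree `d` implies `f ∈ J`. -/
def IsLSat {X : Type*} (J : Ideal (PL K (Option X))) : Prop :=
  ∀ f ∈ Lset K (Y := Option X),
    MvPolynomial.X ((none : Option X), ⟨MvPolynomial.totalDegree f + 1, Nat.succ_pos _⟩) * f ∈ J
      → f ∈ J

/-! ### Monomial orderings -/

/-- The shift action on letterplace monomials. -/
def shiftMon {Y : Type*} (k : ℕ) (m : (Y × ℕ+) →₀ ℕ) : (Y × ℕ+) →₀ ℕ :=
  Finsupp.mapDomain (shiftVar k) m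

/-- A monomial ordering of a (possibly infinite) commutative polynomial ring, given as a strict
order relation on exponent vectors: a well-founded strict total order with `1` minimal,
compatible with multiplication of monomials. -/
structure IsMonOrd {σ : Type*} (r : (σ →₀ ℕ) → (σ →₀ ℕ) → Prop) : Prop where
  total : ∀ m n, r m n ∨ m = n ∨ r n m
  irrefl : ∀ m, ¬ r m m
  trans : ∀ a b c, r a b → r b c → r a c
  wf : WellFounded r
  zero_min : ∀ m, ¬ r m 0
  add_compat : ∀ m n u, r m n → r (u + m) (u + n)

/-- The ordering is compatible with the ℕ-action (an `ℕ`-ordering). -/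
def IsNCompat {Y : Type*} (r : ((Y × ℕ+) →₀ ℕ) → ((Y × ℕ+) →₀ ℕ) → Prop) : Prop :=
  ∀ (k : ℕ) m n, r m n → r (shiftMon k m) (shiftMon k n)

/-- The weight of a letterplace monomial: the largest place index occurring in it
(`⊥ = -∞` for the monomial `1`). -/
def wt {Y : Type*} (m : (Y × ℕ+) →₀ ℕ) : WithBot ℕ :=
  m.support.sup (fun p => ((p.2 : ℕ) : WithBot ℕ))

/-- A weighted ordering: smaller weight implies smaller monomial. -/
def IsWeighted {Y : Type*} (r : ((Y × ℕ+) →₀ ℕ) → ((Y × ℕ+) →₀ ℕ) → Prop) : Prop :=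
  ∀ m n, wt m < wt n → r m n

/-- A monomial ordering of the free algebra `K⟨Y⟩`: a well-founded strict total order on words
compatible with two-sided multiplication. -/
structure IsWordOrd {Y : Type*} (r : FreeMonoid Y → FreeMonoid Y → Prop) : Prop where
  total : ∀ m n, r m n ∨ m = n ∨ r n m
  irrefl : ∀ m, ¬ r m m
  trans : ∀ a b c, r a b → r b c → r a c
  wf : WellFounded r
  mul_compat : ∀ m n u v, r m n → r (u * m * v) (u * n * v)

/-- A word ordering is graded if shorter words are smaller. -/
def IsGradedWordOrd {Y : Type*} (r : FreeMonoid Y → FreeMonoid Y → Prop) : Prop :=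
  ∀ m n, FreeMonoid.length m < FreeMonoid.length n → r m n

/-- The word ordering of `K⟨Y⟩` induced by a monomial ordering of `PL K Y` via `ι`. -/
def inducedWordOrd {Y : Type*} (r : ((Y × ℕ+) →₀ ℕ) → ((Y × ℕ+) →₀ ℕ) → Prop)
    (m n : FreeMonoid Y) : Prop := r (wordExp m) (wordExp n)

/-- The factor of a letterplace monomial at place `j` (a monomial of `P(j) ≅ P(1)`). -/
def fiber {Y : Type*} (m : (Y × ℕ+) →₀ ℕ) (j : ℕ+) : Y →₀ ℕ :=
  Finsupp.comapDomain (fun y => (y, j)) m (fun _ _ _ _ h => congrArg Prod.fst h)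

/-- The place `ℕ`-ordering of `PL K Y` induced by a monomial ordering `r1` of `P(1)`:
compare the factors at the highest place where the two monomials differ. -/
def placeExt {Y : Type*} (r1 : (Y →₀ ℕ) → (Y →₀ ℕ) → Prop)
    (m n : (Y × ℕ+) →₀ ℕ) : Prop :=
  ∃ j : ℕ+, r1 (fiber m j) (fiber n j) ∧ ∀ j', j < j' → fiber m j' = fiber n j'

/-! ### Leading monomials and Gröbner bases -/

/-- `m` is the leading monomial of `f ∈ PL K Y` with respect to the ordering `r`. -/
def IsLM {Y : Type*} (r : ((Y × ℕ+) →₀ ℕ) → ((Y × ℕ+) →₀ ℕ) → Prop)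
    (f : PL K Y) (m : (Y × ℕ+) →₀ ℕ) : Prop :=
  m ∈ f.support ∧ ∀ m' ∈ f.support, m' ≠ m → r m' m

/-- `LM(S)`: the ideal generated by the leading monomials of the nonzero elements of `S`. -/
def LMideal {Y : Type*} (r : ((Y × ℕ+) →₀ ℕ) → ((Y × ℕ+) →₀ ℕ) → Prop)
    (S : Set (PL K Y)) : Ideal (PL K Y) :=
  Ideal.span {p | ∃ f ∈ S, f ≠ 0 ∧ ∃ m, IsLM K r f m ∧ p = MvPolynomial.monomial m (1 : K)}

/-- The ideal generated by `ℕ·lm(G)`. -/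
def shLMideal {Y : Type*} (r : ((Y × ℕ+) →₀ ℕ) → ((Y × ℕ+) →₀ ℕ) → Prop)
    (G : Set (PL K Y)) : Ideal (PL K Y) :=
  Ideal.span {p | ∃ g ∈ G, g ≠ 0 ∧ ∃ m, IsLM K r g m ∧
    ∃ k : ℕ, p = MvPolynomial.monomial (shiftMon k m) (1 : K)}

/-- `G ⊆ I` is a Gröbner `ℕ`-basis of the ℕ-ideal `I`: `ℕ·lm(G)` generates `LM(I)`. -/
def IsGroebnerNB {Y : Type*} (r : ((Y × ℕ+) →₀ ℕ) → ((Y × ℕ+) →₀ ℕ) → Prop)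
    (I : Ideal (PL K Y)) (G : Set (PL K Y)) : Prop :=
  G ⊆ (I : Set (PL K Y)) ∧ shLMideal K r G = LMideal K r (I : Set (PL K Y))

/-- `G` is a Gröbner `L`-basis of the letterplace ideal `J`: `G ⊆ J ∩ L` and the leading monomial
of every nonzero multilinear element of `J` is divisible by a shift of some `lm(g)`, `g ∈ G`. -/
def IsGroebnerLB {Y : Type*} (r : ((Y × ℕ+) →₀ ℕ) → ((Y × ℕ+) →₀ ℕ) → Prop)
    (J : Ideal (PL K Y)) (G : Set (PL K Y)) : Prop :=
  G ⊆ (J : Set (PL K Y)) ∩ Lset K ∧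
  ∀ f ∈ (J : Set (PL K Y)) ∩ Lset K, f ≠ 0 →
    ∃ g ∈ G, ∃ (k : ℕ) (mg mf : (Y × ℕ+) →₀ ℕ),
      IsLM K r g mg ∧ IsLM K r f mf ∧ shiftMon k mg ≤ mf

/-- `w` is the leading monomial (word) of `f ∈ K⟨Y⟩` with respect to the word ordering `r'`. -/
def IsLMF {Y : Type*} (r' : FreeMonoid Y → FreeMonoid Y → Prop)
    (f : FA K Y) (w : FreeMonoid Y) : Prop :=
  w ∈ f.coeff.support ∧ ∀ w' ∈ f.coeff.support, w' ≠ w → r' w' w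

/-- `G ⊆ I` is a Gröbner basis of the two-sided ideal `I ⊆ K⟨Y⟩`: the leading word of every
nonzero `f ∈ I` has the form `u · lm(g) · v` for some nonzero `g ∈ G`. -/
def IsGroebnerBF {Y : Type*} (r' : FreeMonoid Y → FreeMonoid Y → Prop)
    (I : TwoSidedIdeal (FA K Y)) (G : Set (FA K Y)) : Prop :=
  G ⊆ (I : Set (FA K Y)) ∧
  ∀ f ∈ I, f ≠ 0 → ∃ g ∈ G, g ≠ 0 ∧ ∃ (u v wf wg : FreeMonoid Y),
    IsLMF K r' f wf ∧ IsLMF K r' g wg ∧ wf = u * wg * v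

/-! ### Normal forms -/

/-- The generators `x_i(1) x_j(1)` of `N`. -/
def Ngens (Y : Type*) : Set (PL K Y) :=
  {g | ∃ i j : Y, g = MvPolynomial.X (i, (1 : ℕ+)) * MvPolynomial.X (j, (1 : ℕ+))}

/-- A polynomial is in normal form modulo `N` iff in each of its monomials all place indices
are pairwise distinct. -/
def NormalModN {Y : Type*} (f : PL K Y) : Prop :=
  ∀ m ∈ f.support, ∀ k : ℕ+, placeDeg m k ≤ 1

/-- A polynomial is in normal form modulo `D` iff none of its monomials is divisible by a shift
of the leading monomial of some generator `t(1)x_i(2) − x_i(1)t(2)` of `D`. -/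
def NormalModD {X : Type*} (r : (((Option X) × ℕ+) →₀ ℕ) → (((Option X) × ℕ+) →₀ ℕ) → Prop)
    (f : PL K (Option X)) : Prop :=
  ∀ m ∈ f.support, ∀ g ∈ DgensT K X, ∀ mg, IsLM K r g mg → ∀ k : ℕ, ¬ shiftMon k mg ≤ m

/-- `G` is a Gröbner `L`-basis of `J` modulo `D`: its elements are multilinear elements of `J`
in normal form modulo `D`, and together with the generators of `D` they form a
Gröbner `L`-basis of `J`. -/
def IsGroebnerLBmodD {X : Type*}
    (r : (((Option X) × ℕ+) →₀ ℕ) → (((Option X) × ℕ+) →₀ ℕ) → Prop)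
    (J : Ideal (PL K (Option X))) (G : Set (PL K (Option X))) : Prop :=
  (∀ g ∈ G, g ∈ (J : Set (PL K (Option X))) ∩ Lset K ∧ NormalModD K r g) ∧
  IsGroebnerLB K r J (G ∪ DgensT K X)

/-- The commutators `[t, x_i] = t x_i − x_i t` in `F̄`. -/
def commGens (X : Type*) : Set (FA K (Option X)) :=
  {h | ∃ x : X, h = tv K * gen K (some x) - gen K (some x) * tv K}

/-- A polynomial of `F̄` is in normal form modulo `C` iff none of its words contains the leading
word of some commutator `[t, x_i]` as a factor. -/
def NormalModC {X : Type*} (r' : FreeMonoid (Option X) → FreeMonoid (Option X) → Prop)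
    (f : FA K (Option X)) : Prop :=
  ∀ w ∈ f.coeff.support, ∀ g ∈ commGens K X, ∀ wg, IsLMF K r' g wg →
    ¬ ∃ u v, w = u * wg * v

/-! ### Concrete orderings on words -/

/-- The order on the letters of `X ∪ {t}` (with `X = ℕ`): `t ≺ x_1 ≺ x_2 ≺ ⋯`. -/
def optLt : Option ℕ → Option ℕ → Prop
  | none, some _ => True
  | some i, some j => i < j
  | _, none => False

/-- The graded right lexicographic ordering on words: first compare lengths, then compare
letter by letter from the right. -/
def grRightLex {Y : Type*} (lt : Y → Y → Prop) (dflt : Y) (m n : FreeMonoid Y) : Prop :=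
  FreeMonoid.length m < FreeMonoid.length n ∨
  (FreeMonoid.length m = FreeMonoid.length n ∧
    ∃ t < FreeMonoid.length m,
      lt ((FreeMonoid.toList m).getD t dflt) ((FreeMonoid.toList n).getD t dflt) ∧
      ∀ s, t < s → (FreeMonoid.toList m).getD s dflt = (FreeMonoid.toList n).getD s dflt)

end

/-!
Words of `F̄` are compared from the right, and `t` is the smallest letter. Hence among the words
`u` of length `d` with a given `t`-free part `eraseT u = w`, the smallest is
`padT d w = w t^(d - |w|)`, the shape of the words of `f^*`; and `w ↦ padT d w` is strictly
monotone. A word that does not have this shape contains a factor `t x_i`, the leading word of a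
commutator.

Let `0 ≠ f ∈ I^*` have leading word `m = padT d w`, `d = |m|`. Setting `t = 1` in the
degree-`d` component of `f` gives an element `f₀ ∈ I`: this holds for the generators of `I^*`
and is preserved by the ideal operations. By the two facts above, `w` is the leading word of
`f₀`, so `lm(g) ∣ w` for some `g ∈ G`, and `lm(g^*) = lm(g)` divides `m`.
-/

section Lists

variable {α : Type*}

theorem List.exists_max_getD_ne (dflt : α) {a b : List α} (hlen : a.length = b.length)
    (hne : a ≠ b) : ∃ p < a.length, a.getD p dflt ≠ b.getD p dflt ∧
      ∀ s, p < s → a.getD s dflt = b.getD s dflt := by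
  classical
  set D := (Finset.range a.length).filter fun p => a.getD p dflt ≠ b.getD p dflt
  have hD : D.Nonempty := by
    contrapose! hne
    refine List.ext_getElem hlen fun i h1 h2 => ?_
    have := Finset.filter_eq_empty_iff.1 hne (Finset.mem_range.2 h1)
    rwa [not_not, List.getD_eq_getElem _ _ h1, List.getD_eq_getElem _ _ h2] at this
  obtain ⟨hmem, hdiff⟩ := Finset.mem_filter.1 (Finset.max'_mem _ hD)
  refine ⟨_, Finset.mem_range.1 hmem, hdiff, fun s hs => ?_⟩
  by_contra hne'
  by_cases hsa : s < a.length
  · have := Finset.le_max' D s (Finset.mem_filter.2 ⟨Finset.mem_range.2 hsa, hne'⟩)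
    omega
  · exact hne' (by rw [List.getD_eq_default _ _ (by omega), List.getD_eq_default _ _ (by omega)])

theorem List.getElem?_eq_of_getD_eq {a b : List α} (hlen : a.length = b.length) {s : ℕ}
    {dflt : α} (h : a.getD s dflt = b.getD s dflt) : a[s]? = b[s]? := by
  by_cases hs : s < a.length
  · rw [List.getD_eq_getElem _ _ hs, List.getD_eq_getElem _ _ (hlen ▸ hs)] at h
    rw [List.getElem?_eq_getElem hs, List.getElem?_eq_getElem (hlen ▸ hs), h]
  · rw [List.getElem?_eq_none (by omega), List.getElem?_eq_none (by omega)]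

theorem List.drop_eq_of_getD_eq {dflt : α} {a b : List α} (hlen : a.length = b.length) {p : ℕ}
    (h : ∀ s, p < s → a.getD s dflt = b.getD s dflt) : a.drop (p + 1) = b.drop (p + 1) := by
  refine List.ext_getElem (by simp [hlen]) fun i h1 h2 => ?_
  rw [List.length_drop] at h1 h2
  have := h (p + 1 + i) (by omega)
  rw [List.getD_eq_getElem _ _ (by omega), List.getD_eq_getElem _ _ (by omega)] at this
  simpa only [List.getElem_drop] using this

theorem List.reduceOption_map_some (l : List α) : (l.map some).reduceOption = l := by
  simp [List.reduceOption]

theorem List.eq_map_some_reduceOption {l : List (Option α)} (h : ∀ x ∈ l, x.isSome) :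
    l = l.reduceOption.map some := by
  induction l with
  | nil => rfl
  | cons a l ih =>
    obtain ⟨x, rfl⟩ := Option.isSome_iff_exists.1 (h a (by simp))
    simp [List.reduceOption_cons_of_some, ← ih fun y hy => h y (by simp [hy])]

theorem List.eq_map_some_append_of_drop_eq {l : List (Option α)} {v : List α} {k p : ℕ}
    (hp : p < v.length) (hl : l.reduceOption = v)
    (hdrop : l.drop (p + 1) = (v.map some ++ List.replicate k none).drop (p + 1)) :
    l = v.map some ++ List.replicate k none := by
  have hvl : v.length ≤ l.length := hl ▸ List.reduceOption_length_le l
  have hsplit : v = (l.take (p + 1)).reduceOption ++ v.drop (p + 1) := by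
    conv_lhs => rw [← hl, ← List.take_append_drop (p + 1) l]
    rw [List.reduceOption_append, hdrop, List.drop_append, List.length_map,
      Nat.sub_eq_zero_of_le hp, List.drop_zero, ← List.map_drop, List.reduceOption_append,
      List.reduceOption_replicate_none, List.append_nil, List.reduceOption_map_some]
  have htake : (l.take (p + 1)).reduceOption = v.take (p + 1) :=
    List.append_inj_left' (hsplit.symm.trans (List.take_append_drop _ _).symm) rfl
  -- the first `p + 1` letters of `l` contain `p + 1` letters of `α`, so none of them is `none`
  have hltake : l.take (p + 1) = (v.take (p + 1)).map some := by
    rw [← htake]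
    refine List.eq_map_some_reduceOption (List.reduceOption_length_eq_iff.1 ?_)
    rw [htake, List.length_take, List.length_take]
    omega
  rw [← List.take_append_drop (p + 1) l, hltake, hdrop, List.map_take,
    ← List.take_append_of_le_length (l₂ := List.replicate k none) (by simp; omega),
    List.take_append_drop]

theorem List.exists_none_some_or_eq_map_some_append (l : List (Option α)) :
    (∃ a x b, l = a ++ none :: some x :: b) ∨
      l = l.reduceOption.map some ++ List.replicate (l.length - l.reduceOption.length) none := by
  induction l with
  | nil => exact Or.inr rfl
  | cons o l ih =>
    rcases ih with ⟨a, x, b, rfl⟩ | hl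
    · exact Or.inl ⟨o :: a, x, b, rfl⟩
    cases o with
    | some x =>
      refine Or.inr ?_
      simp only [List.reduceOption_cons_of_some, List.map_cons, List.length_cons, List.cons_append]
      rw [Nat.add_sub_add_right, ← hl]
    | none =>
      rcases hv : l.reduceOption with _ | ⟨x, v⟩
      · refine Or.inr ?_
        rw [hv] at hl
        simp only [List.reduceOption_cons_of_none, hv, List.map_nil, List.nil_append,
          List.length_cons, List.length_nil, Nat.sub_zero, List.replicate_succ]
        rw [hl]
        simp
      · rw [hv] at hl
        exact Or.inl ⟨[], x, v.map some ++ List.replicate (l.length - (x :: v).length) none,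
          congrArg (List.cons none) (hl.trans (by simp))⟩

theorem FreeMonoid.toList_of_pow (a : α) (k : ℕ) :
    FreeMonoid.toList (FreeMonoid.of a ^ k) = List.replicate k a := by
  induction k with
  | zero => rfl
  | succ k ih => rw [pow_succ, FreeMonoid.toList_mul, ih, List.replicate_succ']; rfl

end Lists

section GrRightLex

variable {Y : Type*} {lt : Y → Y → Prop} {dflt : Y}

theorem length_le_of_grRightLex {m n : FreeMonoid Y} (h : grRightLex lt dflt m n) :
    FreeMonoid.length m ≤ FreeMonoid.length n := by
  rcases h with h | ⟨h, _⟩ <;> omega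

theorem grRightLex_irrefl [Std.Irrefl lt] (m : FreeMonoid Y) : ¬ grRightLex lt dflt m m := by
  rintro (h | ⟨_, _, _, h, _⟩)
  · exact lt_irrefl _ h
  · exact irrefl _ h

theorem grRightLex_trans [IsTrans Y lt] {a b c : FreeMonoid Y}
    (h₁ : grRightLex lt dflt a b) (h₂ : grRightLex lt dflt b c) : grRightLex lt dflt a c := by
  rcases h₁ with h₁ | ⟨hlen₁, p, hp, hltp, hbp⟩ <;>
    rcases h₂ with h₂ | ⟨hlen₂, q, hq, hltq, hbq⟩
  · exact Or.inl (h₁.trans h₂)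
  · exact Or.inl (hlen₂ ▸ h₁)
  · exact Or.inl (hlen₁ ▸ h₂)
  refine Or.inr ⟨hlen₁.trans hlen₂, ?_⟩
  rcases lt_trichotomy p q with h | rfl | h
  · exact ⟨q, by omega, hbp q h ▸ hltq, fun s hs => (hbp s (by omega)).trans (hbq s hs)⟩
  · exact ⟨p, hp, _root_.trans hltp hltq, fun s hs => (hbp s hs).trans (hbq s hs)⟩
  · exact ⟨p, hp, (hbq p h).symm ▸ hltp, fun s hs => (hbp s hs).trans (hbq s (by omega))⟩

theorem grRightLex_trichotomous [Std.Trichotomous lt] (m n : FreeMonoid Y) :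
    grRightLex lt dflt m n ∨ m = n ∨ grRightLex lt dflt n m := by
  rcases lt_trichotomy (FreeMonoid.length m) (FreeMonoid.length n) with h | h | h
  · exact Or.inl (Or.inl h)
  · by_cases hmn : m = n
    · exact Or.inr (Or.inl hmn)
    obtain ⟨p, hp, hne, hbeyond⟩ :=
      List.exists_max_getD_ne dflt h (fun hc => hmn (FreeMonoid.toList.injective hc))
    rcases trichotomous_of lt ((FreeMonoid.toList m).getD p dflt)
        ((FreeMonoid.toList n).getD p dflt) with hlt | heq | hgt
    · exact Or.inl (Or.inr ⟨h, p, hp, hlt, hbeyond⟩)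
    · exact absurd heq hne
    · exact Or.inr <| Or.inr <| Or.inr
        ⟨h.symm, p, h ▸ hp, hgt, fun s hs => (hbeyond s hs).symm⟩
  · exact Or.inr (Or.inr (Or.inl h))

instance [IsStrictTotalOrder Y lt] : IsStrictTotalOrder (FreeMonoid Y) (grRightLex lt dflt) where
  irrefl := grRightLex_irrefl
  trans _ _ _ := grRightLex_trans
  trichotomous m n h₁ h₂ :=
    (grRightLex_trichotomous m n).resolve_left h₁ |>.resolve_right h₂

theorem optLt_eq_withBot_lt : optLt = ((· < ·) : WithBot ℕ → WithBot ℕ → Prop) := by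
  funext a b
  cases a <;> cases b <;> simp [optLt, WithBot.none_eq_bot, WithBot.some_eq_coe]

instance : IsStrictTotalOrder (Option ℕ) optLt :=
  optLt_eq_withBot_lt ▸ inferInstanceAs (IsStrictTotalOrder (WithBot ℕ) (· < ·))

end GrRightLex

section LeadingWord

variable (K : Type*) [Field K] {Y : Type*} {r : FreeMonoid Y → FreeMonoid Y → Prop}

theorem IsLMF.unique [IsStrictTotalOrder (FreeMonoid Y) r] {f : FA K Y} {w₁ w₂ : FreeMonoid Y}
    (h₁ : IsLMF K r f w₁) (h₂ : IsLMF K r f w₂) : w₁ = w₂ := by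
  by_contra hne
  exact asymm (h₁.2 w₂ h₂.1 (Ne.symm hne)) (h₂.2 w₁ h₁.1 hne)

theorem IsLMF.ne_zero {f : FA K Y} {w : FreeMonoid Y} (h : IsLMF K r f w) : f ≠ 0 := by
  rintro rfl
  exact Finsupp.notMem_support_iff.2 rfl h.1

theorem exists_isLMF [IsStrictTotalOrder (FreeMonoid Y) r] {f : FA K Y} (hf : f ≠ 0) :
    ∃ w, IsLMF K r f w := by
  classical
  let := linearOrderOfSTO r
  have hs : f.coeff.support.Nonempty := by simpa using hf
  exact ⟨_, f.coeff.support.max'_mem hs,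
    fun w hw hne => lt_of_le_of_ne (f.coeff.support.le_max' w hw) hne⟩

theorem length_eq_degF_of_isLMF {lt : Y → Y → Prop} {dflt : Y} {g : FA K Y} {w : FreeMonoid Y}
    (h : IsLMF K (grRightLex lt dflt) g w) : FreeMonoid.length w = degF K g :=
  le_antisymm (Finset.le_sup h.1) <| Finset.sup_le fun w' hw' => by
    by_cases hne : w' = w
    · rw [hne]
    · exact length_le_of_grRightLex (h.2 w' hw' hne)

end LeadingWord

section Words

variable {X : Type*}

def eraseT : FreeMonoid (Option X) →* FreeMonoid X where
  toFun u := FreeMonoid.ofList (FreeMonoid.toList u).reduceOption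
  map_one' := rfl
  map_mul' _ _ := List.reduceOption_append _ _

def padT (d : ℕ) (w : FreeMonoid X) : FreeMonoid (Option X) :=
  embWord w * FreeMonoid.of none ^ (d - FreeMonoid.length w)

theorem eraseT_of_none : eraseT (FreeMonoid.of (none : Option X)) = 1 := rfl

theorem eraseT_of_some (x : X) : eraseT (FreeMonoid.of (some x)) = FreeMonoid.of x := rfl

theorem length_eraseT_le (u : FreeMonoid (Option X)) :
    FreeMonoid.length (eraseT u) ≤ FreeMonoid.length u :=
  List.reduceOption_length_le _

theorem toList_embWord (w : FreeMonoid X) :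
    FreeMonoid.toList (embWord w) = (FreeMonoid.toList w).map some := rfl

theorem eraseT_embWord (w : FreeMonoid X) : eraseT (embWord w) = w :=
  List.reduceOption_map_some _

theorem toList_padT (d : ℕ) (w : FreeMonoid X) :
    FreeMonoid.toList (padT d w) =
      (FreeMonoid.toList w).map some ++ List.replicate (d - FreeMonoid.length w) none := by
  rw [padT, FreeMonoid.toList_mul, FreeMonoid.toList_of_pow, toList_embWord]

theorem length_padT {d : ℕ} {w : FreeMonoid X} (hw : FreeMonoid.length w ≤ d) :
    FreeMonoid.length (padT d w) = d := by
  have hlen : (FreeMonoid.toList w).length = FreeMonoid.length w := rfl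
  change (FreeMonoid.toList (padT d w)).length = d
  rw [toList_padT, List.length_append, List.length_map, List.length_replicate]
  omega

theorem padT_length_self (w : FreeMonoid X) : padT (FreeMonoid.length w) w = embWord w := by
  rw [padT, Nat.sub_self, pow_zero, mul_one]

theorem eraseT_padT (d : ℕ) (w : FreeMonoid X) : eraseT (padT d w) = w := by
  rw [padT, map_mul, eraseT_embWord, map_pow, eraseT_of_none, one_pow, mul_one]

theorem padT_injective (d : ℕ) : Function.Injective (padT (X := X) d) :=
  Function.LeftInverse.injective (eraseT_padT d)

theorem getD_toList_padT (d : ℕ) (w : FreeMonoid X) (s : ℕ) :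
    (FreeMonoid.toList (padT d w)).getD s none = (FreeMonoid.toList w)[s]? := by
  rw [toList_padT, List.getD_eq_getElem?_getD, List.getElem?_append]
  split_ifs with h
  · rw [List.getElem?_map]
    cases (FreeMonoid.toList w)[s]? <;> rfl
  · rw [List.length_map, not_lt] at h
    rw [List.getElem?_eq_none h, List.getElem?_replicate]
    split_ifs <;> rfl

theorem padT_ne_mul_ofList_mul (d : ℕ) (w : FreeMonoid X) (a b : FreeMonoid (Option X)) (x : X) :
    padT d w ≠ a * FreeMonoid.ofList [none, some x] * b := by
  intro h
  have hL : FreeMonoid.toList (padT d w) =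
      FreeMonoid.toList a ++ none :: some x :: FreeMonoid.toList b := by
    rw [h, FreeMonoid.toList_mul, FreeMonoid.toList_mul, List.append_assoc]
    rfl
  have hat : ∀ i, (FreeMonoid.toList w)[(FreeMonoid.toList a).length + i]? =
      (none :: some x :: FreeMonoid.toList b).getD i none := fun i => by
    rw [← getD_toList_padT d, hL, List.getD_append_right _ _ _ _ (Nat.le_add_right _ _),
      Nat.add_sub_cancel_left]
  have hnone := hat 0
  have hsome := hat 1
  rw [List.getD_cons_zero, List.getElem?_eq_none_iff] at hnone
  rw [List.getD_cons_succ, List.getD_cons_zero, List.getElem?_eq_none (by omega)] at hsome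
  cases hsome

theorem exists_eq_mul_ofList_mul_or_eq_padT (u : FreeMonoid (Option X)) :
    (∃ a x b, u = a * FreeMonoid.ofList [none, some x] * b) ∨
      u = padT (FreeMonoid.length u) (eraseT u) := by
  rcases List.exists_none_some_or_eq_map_some_append (FreeMonoid.toList u) with ⟨a, x, b, h⟩ | h
  · exact Or.inl ⟨FreeMonoid.ofList a, x, FreeMonoid.ofList b,
      FreeMonoid.toList.injective (by simpa using h)⟩
  · exact Or.inr (FreeMonoid.toList.injective (h.trans (toList_padT _ _).symm))

end Words

section PadOrder

theorem grRightLex_padT_padT {d : ℕ} {w w' : FreeMonoid ℕ} (hw' : FreeMonoid.length w' ≤ d)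
    (h : grRightLex (· < ·) 0 w w') : grRightLex optLt none (padT d w) (padT d w') := by
  have hw := (length_le_of_grRightLex h).trans hw'
  have hlw : (FreeMonoid.toList w).length = FreeMonoid.length w := rfl
  have hlw' : (FreeMonoid.toList w').length = FreeMonoid.length w' := rfl
  refine Or.inr ⟨(length_padT hw).trans (length_padT hw').symm, ?_⟩
  simp only [getD_toList_padT, length_padT hw]
  rcases h with hlt | ⟨hlen, q, hq, hltq, hbeyond⟩
  · refine ⟨FreeMonoid.length w' - 1, by omega, ?_, fun s hs => ?_⟩
    · rw [List.getElem?_eq_none (by omega), List.getElem?_eq_getElem (by omega)]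
      trivial
    · rw [List.getElem?_eq_none (by omega), List.getElem?_eq_none (by omega)]
  · refine ⟨q, by omega, ?_, fun s hs => List.getElem?_eq_of_getD_eq hlen (hbeyond s hs)⟩
    rw [List.getD_eq_getElem _ _ hq, List.getD_eq_getElem _ _ (by omega)] at hltq
    rw [List.getElem?_eq_getElem hq, List.getElem?_eq_getElem (by omega)]
    exact hltq

theorem padT_eraseT_eq_or_grRightLex (u : FreeMonoid (Option ℕ)) :
    padT (FreeMonoid.length u) (eraseT u) = u ∨
      grRightLex optLt none (padT (FreeMonoid.length u) (eraseT u)) u := by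
  set P := padT (FreeMonoid.length u) (eraseT u)
  have hlenP : FreeMonoid.length P = FreeMonoid.length u := length_padT (length_eraseT_le u)
  by_cases hPu : P = u
  · exact Or.inl hPu
  obtain ⟨p, hp, hne, hbeyond⟩ :=
    List.exists_max_getD_ne none hlenP (fun h => hPu (FreeMonoid.toList.injective h))
  refine Or.inr (Or.inr ⟨hlenP, p, hp, ?_, hbeyond⟩)
  have hvp : FreeMonoid.length (eraseT u) ≤ p := by
    by_contra! hpv
    refine hPu (FreeMonoid.toList.injective ?_)
    have hdrop := List.drop_eq_of_getD_eq hlenP hbeyond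
    rw [toList_padT] at hdrop ⊢
    exact (List.eq_map_some_append_of_drop_eq hpv rfl hdrop.symm).symm
  rw [getD_toList_padT, List.getElem?_eq_none hvp] at hne ⊢
  obtain ⟨z, hz⟩ := Option.ne_none_iff_exists'.1 (Ne.symm hne)
  rw [hz]
  trivial

theorem grRightLex_padT_of_grRightLex_eraseT (u : FreeMonoid (Option ℕ)) {w : FreeMonoid ℕ}
    (h : grRightLex (· < ·) 0 w (eraseT u)) :
    grRightLex optLt none (padT (FreeMonoid.length u) w) u := by
  have hpad := grRightLex_padT_padT (length_eraseT_le u) h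
  rcases padT_eraseT_eq_or_grRightLex u with heq | hlt
  · rwa [heq] at hpad
  · exact grRightLex_trans hpad hlt

end PadOrder

section Dehomogenization

variable (K : Type*) [Field K] {X : Type*}

noncomputable def dehom : FA K (Option X) →ₐ[K] FA K X :=
  MonoidAlgebra.mapDomainAlgHom K K eraseT

theorem emb_eq_mapDomainAlgHom : emb K (X := X) = MonoidAlgebra.mapDomainAlgHom K K embWord := by
  apply MonoidAlgebra.algHom_ext
  · intro w
    simp [emb]
  · ext

theorem phi_eq_emb_comp_dehom : phi K (X := X) = (emb K).comp (dehom K) := by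
  apply MonoidAlgebra.algHom_ext'
  · apply FreeMonoid.hom_eq
    rintro (_ | x) <;>
      simp [phi, emb_eq_mapDomainAlgHom, dehom, eraseT_of_none, eraseT_of_some, embWord, gen,
        MonoidAlgebra.one_def]
  · ext

variable {K}

theorem dehom_emb (f : FA K X) : dehom K (emb K f) = f := by
  rw [← AlgHom.comp_apply, dehom, emb_eq_mapDomainAlgHom, ← MonoidAlgebra.mapDomainAlgHom_comp,
    show eraseT.comp embWord = MonoidHom.id (FreeMonoid X) from MonoidHom.ext eraseT_embWord,
    MonoidAlgebra.mapDomainAlgHom_id, AlgHom.id_apply]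

theorem exists_mem_support_of_mem_support_dehom {f : FA K (Option X)} {w : FreeMonoid X}
    (hw : w ∈ (dehom K f).coeff.support) : ∃ u ∈ f.coeff.support, eraseT u = w := by
  classical
  simpa using Finsupp.mapDomain_support hw

theorem coeff_dehom_of_unique {f : FA K (Option X)} {m : FreeMonoid (Option X)}
    (huniq : ∀ u ∈ f.coeff.support, eraseT u = eraseT m → u = m) :
    (dehom K f).coeff (eraseT m) = f.coeff m := by
  classical
  simp only [dehom, MonoidAlgebra.mapDomainAlgHom_apply, MonoidAlgebra.mapDomain,
    MonoidAlgebra.coeff_ofCoeff, Finsupp.mapDomain, Finsupp.sum_apply, Finsupp.single_apply]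
  by_cases hm : m ∈ f.coeff.support
  · exact (Finset.sum_eq_single m (fun u hu hne => if_neg fun h => hne (huniq u hu h))
      (absurd hm)).trans (if_pos rfl)
  · rw [Finsupp.notMem_support_iff.1 hm]
    exact Finset.sum_eq_zero fun u hu => if_neg fun h => hm (huniq u hu h ▸ hu)

theorem hstar_eq_mapDomain (g : FA K X) :
    hstar K g = MonoidAlgebra.mapDomain (padT (degF K g)) g := by
  ext u
  simp [hstar, padT, MonoidAlgebra.mapDomain, Finsupp.mapDomain, Finsupp.sum]

theorem coeff_hstar_padT (g : FA K X) (w : FreeMonoid X) :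
    (hstar K g).coeff (padT (degF K g) w) = g.coeff w := by
  rw [hstar_eq_mapDomain]
  exact Finsupp.mapDomain_apply (padT_injective _) _ _

theorem exists_padT_of_mem_support_hstar {g : FA K X} {u : FreeMonoid (Option X)}
    (hu : u ∈ (hstar K g).coeff.support) : ∃ w ∈ g.coeff.support, u = padT (degF K g) w := by
  classical
  rw [hstar_eq_mapDomain] at hu
  obtain ⟨w, hw, rfl⟩ := Finset.mem_image.1 (Finsupp.mapDomain_support hu)
  exact ⟨w, hw, rfl⟩

theorem isHomog_hstar (g : FA K X) : IsHomog K (degF K g) (hstar K g) := by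
  intro u hu
  obtain ⟨w, hw, rfl⟩ := exists_padT_of_mem_support_hstar hu
  exact length_padT (Finset.le_sup hw)

theorem dehom_hstar (g : FA K X) : dehom K (hstar K g) = g := by
  ext1
  rw [hstar_eq_mapDomain, dehom, MonoidAlgebra.mapDomainAlgHom_apply]
  simp only [MonoidAlgebra.mapDomain, MonoidAlgebra.coeff_ofCoeff, ← Finsupp.mapDomain_comp]
  rw [show ⇑eraseT ∘ padT (degF K g) = id from funext (eraseT_padT _), Finsupp.mapDomain_id]

theorem hstar_ne_zero {g : FA K X} (hg : g ≠ 0) : hstar K g ≠ 0 :=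
  fun h => hg (by rw [← dehom_hstar g, h, map_zero])

end Dehomogenization

section HomogeneousComponents

variable {K : Type*} [Field K] {X : Type*}

theorem coeff_homComp (d : ℕ) (f : FA K X) :
    (homComp K d f).coeff = f.coeff.filter fun w => FreeMonoid.length w = d := by
  rw [Finsupp.filter_eq_sum, homComp, MonoidAlgebra.coeff_sum]
  rfl

theorem mem_support_homComp {d : ℕ} {f : FA K X} {u : FreeMonoid X} :
    u ∈ (homComp K d f).coeff.support ↔ u ∈ f.coeff.support ∧ FreeMonoid.length u = d := by
  rw [coeff_homComp, Finsupp.support_filter, Finset.mem_filter]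

theorem coeff_homComp_length (f : FA K X) (u : FreeMonoid X) :
    (homComp K (FreeMonoid.length u) f).coeff u = f.coeff u := by
  rw [coeff_homComp, Finsupp.filter_apply, if_pos rfl]

theorem homComp_zero (d : ℕ) : homComp K d (0 : FA K X) = 0 :=
  MonoidAlgebra.coeff_injective <| by
    simp only [coeff_homComp, MonoidAlgebra.coeff_zero, Finsupp.filter_zero]

theorem homComp_add (d : ℕ) (f g : FA K X) :
    homComp K d (f + g) = homComp K d f + homComp K d g :=
  MonoidAlgebra.coeff_injective <| by
    simp only [coeff_homComp, MonoidAlgebra.coeff_add, Finsupp.filter_add]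

theorem homComp_neg (d : ℕ) (f : FA K X) : homComp K d (-f) = -homComp K d f :=
  MonoidAlgebra.coeff_injective <| by
    simp only [coeff_homComp, MonoidAlgebra.coeff_neg, Finsupp.filter_neg]

theorem homComp_of_isHomog {d : ℕ} {f : FA K X} (hf : IsHomog K d f) : homComp K d f = f :=
  MonoidAlgebra.coeff_injective <| (coeff_homComp d f).trans <|
    (Finsupp.filter_eq_self_iff _ _).2 fun w hw => hf w (Finsupp.mem_support_iff.2 hw)

theorem homComp_of_isHomog_of_ne {d e : ℕ} {f : FA K X} (hf : IsHomog K e f) (hne : d ≠ e) :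
    homComp K d f = 0 :=
  MonoidAlgebra.coeff_injective <| (coeff_homComp d f).trans <|
    (Finsupp.filter_eq_zero_iff _ _).2 fun w hw =>
      Finsupp.notMem_support_iff.1 fun h => hne (hw ▸ hf w h)

theorem homComp_single (d : ℕ) (u : FreeMonoid X) (c : K) :
    homComp K d (MonoidAlgebra.single u c) =
      if FreeMonoid.length u = d then MonoidAlgebra.single u c else 0 := by
  refine MonoidAlgebra.coeff_injective ?_
  rw [coeff_homComp, MonoidAlgebra.coeff_single]
  split_ifs with h
  · exact Finsupp.filter_single_of_pos _ h
  · exact Finsupp.filter_single_of_neg _ h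

theorem homComp_single_mul (d : ℕ) (u : FreeMonoid X) (c : K) (y : FA K X) :
    homComp K d (MonoidAlgebra.single u c * y) =
      if FreeMonoid.length u ≤ d then
        MonoidAlgebra.single u c * homComp K (d - FreeMonoid.length u) y
      else 0 := by
  induction y using MonoidAlgebra.induction_linear with
  | zero => simp [homComp_zero]
  | add y z hy hz => rw [mul_add, homComp_add, hy, hz, homComp_add, mul_add]; split_ifs <;> simp
  | single w b =>
    rw [MonoidAlgebra.single_mul_single, homComp_single, homComp_single, FreeMonoid.length_mul]
    split_ifs <;> first | rfl | omega | simp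

theorem homComp_mul_single (d : ℕ) (u : FreeMonoid X) (c : K) (y : FA K X) :
    homComp K d (y * MonoidAlgebra.single u c) =
      if FreeMonoid.length u ≤ d then
        homComp K (d - FreeMonoid.length u) y * MonoidAlgebra.single u c
      else 0 := by
  induction y using MonoidAlgebra.induction_linear with
  | zero => simp [homComp_zero]
  | add y z hy hz => rw [add_mul, homComp_add, hy, hz, homComp_add, add_mul]; split_ifs <;> simp
  | single w b =>
    rw [MonoidAlgebra.single_mul_single, homComp_single, homComp_single, FreeMonoid.length_mul]
    split_ifs <;> first | rfl | omega | simp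

theorem dehom_homComp_mem {I : TwoSidedIdeal (FA K X)} {f : FA K (Option X)}
    (hf : f ∈ hstarIdeal K I) (d : ℕ) : dehom K (homComp K d f) ∈ I := by
  induction hf using TwoSidedIdeal.span_induction generalizing d with
  | mem g hg =>
    obtain ⟨⟨e, he⟩, f₀, hf₀, hphi⟩ := hg
    rw [phi_eq_emb_comp_dehom, AlgHom.comp_apply] at hphi
    by_cases hd : d = e
    · rw [hd, homComp_of_isHomog he, ← dehom_emb (dehom K g), hphi, dehom_emb]
      exact hf₀
    · rw [homComp_of_isHomog_of_ne he hd, map_zero]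
      exact I.zero_mem
  | zero => rw [homComp_zero, map_zero]; exact I.zero_mem
  | add x y _ _ hx hy => rw [homComp_add, map_add]; exact I.add_mem (hx d) (hy d)
  | neg x _ hx => rw [homComp_neg, map_neg]; exact I.neg_mem (hx d)
  | left_absorb a x _ hx =>
    induction a using MonoidAlgebra.induction_linear generalizing d with
    | zero => rw [zero_mul, homComp_zero, map_zero]; exact I.zero_mem
    | add a b ha hb => rw [add_mul, homComp_add, map_add]; exact I.add_mem (ha d) (hb d)
    | single u c =>
      rw [homComp_single_mul]
      split_ifs
      · rw [map_mul]; exact I.mul_mem_left _ _ (hx _)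
      · rw [map_zero]; exact I.zero_mem
  | right_absorb b x _ hx =>
    induction b using MonoidAlgebra.induction_linear generalizing d with
    | zero => rw [mul_zero, homComp_zero, map_zero]; exact I.zero_mem
    | add a b ha hb => rw [mul_add, homComp_add, map_add]; exact I.add_mem (ha d) (hb d)
    | single u c =>
      rw [homComp_mul_single]
      split_ifs
      · rw [map_mul]; exact I.mul_mem_right _ _ (hx _)
      · rw [map_zero]; exact I.zero_mem

end HomogeneousComponents

section GroebnerBasis

variable {K : Type*} [Field K]

theorem hstar_mem_hstarIdeal {X : Type*} {I : TwoSidedIdeal (FA K X)} {g : FA K X} (hg : g ∈ I) :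
    hstar K g ∈ hstarIdeal K I :=
  TwoSidedIdeal.subset_span ⟨⟨degF K g, isHomog_hstar g⟩, g, hg,
    by rw [phi_eq_emb_comp_dehom, AlgHom.comp_apply, dehom_hstar]⟩

theorem commutator_eq {X : Type*} (x : X) :
    tv K * gen K (some x) - gen K (some x) * tv K =
      MonoidAlgebra.single (FreeMonoid.ofList [none, some x]) 1 -
        MonoidAlgebra.single (FreeMonoid.ofList [some x, none]) 1 := by
  simp only [tv, gen, MonoidAlgebra.of_apply, MonoidAlgebra.single_mul_single, one_mul]
  rfl

theorem commutator_mem_hstarIdeal {X : Type*} (I : TwoSidedIdeal (FA K X)) (x : X) :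
    tv K * gen K (some x) - gen K (some x) * tv K ∈ hstarIdeal K I := by
  classical
  refine TwoSidedIdeal.subset_span ⟨⟨2, fun w hw => ?_⟩, 0, I.zero_mem, ?_⟩
  · rw [commutator_eq] at hw
    rcases Finset.mem_union.1 (Finsupp.support_sub hw) with h | h <;>
      rw [Finset.mem_singleton.1 (Finsupp.support_single_subset h)] <;> rfl
  · rw [commutator_eq, map_sub, map_zero, phi_eq_emb_comp_dehom]
    exact sub_eq_zero.2 (by simp [dehom, eraseT_of_none, eraseT_of_some])

theorem isLMF_commutator (x : ℕ) :
    IsLMF K (grRightLex optLt none) (tv K * gen K (some x) - gen K (some x) * tv K)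
      (FreeMonoid.ofList [none, some x]) := by
  classical
  have hne : FreeMonoid.ofList [none, some x] ≠ FreeMonoid.ofList [some x, none] :=
    fun h => by simpa using congrArg FreeMonoid.toList h
  rw [commutator_eq]
  refine ⟨?_, fun w hw hw' => ?_⟩
  · rw [Finsupp.mem_support_iff, MonoidAlgebra.coeff_sub, Finsupp.sub_apply,
      MonoidAlgebra.coeff_single, MonoidAlgebra.coeff_single, Finsupp.single_eq_same,
      Finsupp.single_eq_of_ne hne, sub_zero]
    exact one_ne_zero
  rcases Finset.mem_union.1 (Finsupp.support_sub hw) with h | h <;>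
    rw [Finset.mem_singleton.1 (Finsupp.support_single_subset h)] at hw' ⊢
  · exact absurd rfl hw'
  · refine Or.inr ⟨rfl, 1, by simp, trivial, fun s hs => ?_⟩
    simp only [FreeMonoid.toList_ofList, List.getD_eq_getElem?_getD]
    rw [List.getElem?_eq_none (by simp; omega), List.getElem?_eq_none (by simp; omega)]

theorem normalModC_hstar (g : FA K ℕ) : NormalModC K (grRightLex optLt none) (hstar K g) := by
  rintro u hu _ ⟨x, rfl⟩ wc hwc ⟨a, b, rfl⟩
  obtain ⟨w, -, hw⟩ := exists_padT_of_mem_support_hstar hu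
  rw [hwc.unique K (isLMF_commutator x)] at hw
  exact padT_ne_mul_ofList_mul _ w a b x hw.symm

theorem isLMF_hstar {g : FA K ℕ} {w : FreeMonoid ℕ}
    (hw : IsLMF K (grRightLex (· < ·) 0) g w) :
    IsLMF K (grRightLex optLt none) (hstar K g) (embWord w) := by
  have hdeg := length_eq_degF_of_isLMF K hw
  have hpad : embWord w = padT (degF K g) w := by rw [← hdeg, padT_length_self]
  refine ⟨?_, fun u hu hne => ?_⟩
  · rw [hpad, Finsupp.mem_support_iff, coeff_hstar_padT]
    exact Finsupp.mem_support_iff.1 hw.1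
  obtain ⟨w', hw', rfl⟩ := exists_padT_of_mem_support_hstar hu
  rw [hpad] at hne ⊢
  exact grRightLex_padT_padT hdeg.le (hw.2 w' hw' fun h => hne (h ▸ rfl))

theorem isLMF_dehom_homComp {f : FA K (Option ℕ)} {m : FreeMonoid (Option ℕ)}
    (hm : IsLMF K (grRightLex optLt none) f m)
    (hpad : m = padT (FreeMonoid.length m) (eraseT m)) :
    IsLMF K (grRightLex (· < ·) 0) (dehom K (homComp K (FreeMonoid.length m) f)) (eraseT m) := by
  set d := FreeMonoid.length m
  have hsupp : ∀ u ∈ (homComp K d f).coeff.support, u ≠ m → grRightLex optLt none u m :=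
    fun u hu => hm.2 u (mem_support_homComp.1 hu).1
  have hcoeff : (dehom K (homComp K d f)).coeff (eraseT m) = f.coeff m := by
    refine (coeff_dehom_of_unique fun u hu herase => ?_).trans (coeff_homComp_length f m)
    have hlen := (mem_support_homComp.1 hu).2
    rcases padT_eraseT_eq_or_grRightLex u with h | h
    · rw [← h, herase, hlen, ← hpad]
    · by_contra hne
      rw [herase, hlen, ← hpad] at h
      exact asymm h (hsupp u hu hne)
  refine ⟨?_, fun w' hw' hne => ?_⟩
  · rw [Finsupp.mem_support_iff, hcoeff]
    exact Finsupp.mem_support_iff.1 hm.1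
  by_contra hlt
  obtain ⟨u, hu, rfl⟩ := exists_mem_support_of_mem_support_dehom hw'
  have hgt :=
    (trichotomous_of (grRightLex (· < ·) (0 : ℕ)) (eraseT u) (eraseT m)).resolve_left hlt
  have hmu := grRightLex_padT_of_grRightLex_eraseT u (hgt.resolve_left hne)
  rw [(mem_support_homComp.1 hu).2, ← hpad] at hmu
  exact asymm hmu (hsupp u hu fun h => hne (h ▸ rfl))

theorem exists_isLMF_dvd_of_mem_hstarIdeal {I : TwoSidedIdeal (FA K ℕ)} {G : Set (FA K ℕ)}
    (hG : IsGroebnerBF K (grRightLex (· < ·) 0) I G) {f : FA K (Option ℕ)}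
    (hf : f ∈ hstarIdeal K I) (hf0 : f ≠ 0) :
    ∃ g ∈ {h | ∃ g ∈ G, g ≠ 0 ∧ h = hstar K g} ∪ commGens K ℕ, g ≠ 0 ∧
      ∃ u v wf wg, IsLMF K (grRightLex optLt none) f wf ∧
        IsLMF K (grRightLex optLt none) g wg ∧ wf = u * wg * v := by
  obtain ⟨m, hm⟩ := exists_isLMF K (r := grRightLex optLt none) hf0
  rcases exists_eq_mul_ofList_mul_or_eq_padT m with ⟨a, x, b, rfl⟩ | hpad
  · exact ⟨_, Or.inr ⟨x, rfl⟩, (isLMF_commutator x).ne_zero, a, b, _, _, hm,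
      isLMF_commutator x, rfl⟩
  have hlm₀ := isLMF_dehom_homComp hm hpad
  obtain ⟨g, hgG, hg0, a, b, wf, wg, hwf, hwg, hdvd⟩ :=
    hG.2 _ (dehom_homComp_mem hf _) hlm₀.ne_zero
  rw [hwf.unique K hlm₀] at hdvd
  refine ⟨hstar K g, Or.inl ⟨g, hgG, hg0, rfl⟩, hstar_ne_zero hg0, embWord a,
    embWord b * FreeMonoid.of none ^ (FreeMonoid.length m - FreeMonoid.length (eraseT m)),
    m, embWord wg, hm, isLMF_hstar hwg, ?_⟩
  conv_lhs => rw [hpad, padT]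
  nth_rewrite 1 [hdvd]
  simp only [map_mul, mul_assoc]

end GroebnerBasis

/-- If `G` is any Gröbner basis of a two-sided ideal `I ⊆ F` with respect to
the graded right lexicographic ordering, then `G^* = {g^* : 0 ≠ g ∈ G}` is a homogeneous
Gröbner basis of `I^*` modulo `C` (its elements are homogeneous and in normal form modulo `C`,
and `G^* ∪ {[t,x_i]}` is a Gröbner basis of `I^*` for the graded right lexicographic ordering
of `F̄` with `t` smallest); moreover `lm(G^*) = lm(G)`. -/
theorem statement_17 (K : Type*) [Field K]
    (I : TwoSidedIdeal (FA K ℕ)) (G : Set (FA K ℕ))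
    (hG : IsGroebnerBF K (grRightLex (· < ·) 0) I G) :
    (∀ h ∈ {h | ∃ g ∈ G, g ≠ 0 ∧ h = hstar K g},
        (∃ d, IsHomog K d h) ∧ NormalModC K (grRightLex optLt none) h) ∧
    IsGroebnerBF K (grRightLex optLt none) (hstarIdeal K I)
      ({h | ∃ g ∈ G, g ≠ 0 ∧ h = hstar K g} ∪ commGens K ℕ) ∧
    embWord '' {w | ∃ g ∈ G, g ≠ 0 ∧ IsLMF K (grRightLex (· < ·) 0) g w} =
      {w | ∃ h, (∃ g ∈ G, g ≠ 0 ∧ h = hstar K g) ∧ h ≠ 0 ∧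
        IsLMF K (grRightLex optLt none) h w} := by
  refine ⟨?_, ⟨?_, fun f hf hf0 => exists_isLMF_dvd_of_mem_hstarIdeal hG hf hf0⟩, ?_⟩
  · rintro _ ⟨g, -, -, rfl⟩
    exact ⟨⟨degF K g, isHomog_hstar g⟩, normalModC_hstar g⟩
  · rintro _ (⟨g, hgG, -, rfl⟩ | ⟨x, rfl⟩)
    · exact hstar_mem_hstarIdeal (hG.1 hgG)
    · exact commutator_mem_hstarIdeal I x
  · ext w
    constructor
    · rintro ⟨w, ⟨g, hgG, hg0, hw⟩, rfl⟩
      exact ⟨hstar K g, ⟨g, hgG, hg0, rfl⟩, hstar_ne_zero hg0, isLMF_hstar hw⟩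
    · rintro ⟨_, ⟨g, hgG, hg0, rfl⟩, -, hw⟩
      obtain ⟨wg, hwg⟩ := exists_isLMF K (r := grRightLex (· < ·) 0) hg0
      exact ⟨wg, ⟨g, hgG, hg0, hwg⟩, (hw.unique K (isLMF_hstar hwg)).symm⟩
end

section
/- If I is a graded two-sided ideal of F then J = ⟨ι(I)⟩_ℕ is a letterplace ideal of P; conversely, if J is a letterplace ideal of P then I = ι^{-1}(J ∩ V) is a graded two-sided ideal of F; moreover, the assignments I ↦ ⟨ι(I)⟩_ℕ and J ↦ ι^{-1}(J ∩ V) are mutually inverse bijections between the set of graded two-sided ideals of F and the set of letterplace ideals of P. -/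
/-! Place multidegree makes `P` multigraded, and `ι` sends the words of length `d` to the
multilinear monomials of multidegree `χ_{[1,d]}`. Multiplying `ι(f)` on the left by a word `u`
amounts to multiplying by `ι(u)` after shifting by `|u|`, and multiplying a homogeneous `ι(f)` of
degree `d` on the right by `v` amounts to multiplying by the `d`-fold shift of `ι(v)`. Hence
`ι⁻¹(J)` is a two-sided ideal as soon as `J` is a multigraded ℕ-ideal, which a letterplace ideal
is, being ℕ-generated by multihomogeneous elements.

Conversely, let `m` be a monomial and `g` homogeneous of degree `e`. The product `m · (k · ι(g))`
has a multilinear monomial only if its multidegree is some `χ_{[1,d]}`, and then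
`m = ι(u) · ((k + e) · ι(v))` with `|u| = k`, so that the product is `ι(u g v)`. Therefore the
retraction of `P` onto `V` that keeps the multilinear monomials maps `⟨ι(I)⟩_ℕ` into `I`, which
gives `ι⁻¹(⟨ι(I)⟩_ℕ ∩ V) = I`. -/

open MvPolynomial

theorem MvPolynomial.IsWeightedHomogeneous.rename {σ τ R M N : Type*} [CommSemiring R]
    [AddCommMonoid M] [AddCommMonoid N] {w : σ → M} {w' : τ → N} {f : σ → τ} (g : M →+ N)
    (hw : ∀ i, w' (f i) = g (w i)) {φ : MvPolynomial σ R} {m : M}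
    (h : IsWeightedHomogeneous w φ m) : IsWeightedHomogeneous w' (rename f φ) (g m) := by
  intro d hd
  obtain ⟨u, rfl, hu⟩ := coeff_rename_ne_zero f φ d hd
  rw [← h hu, Finsupp.weight_apply, Finsupp.weight_apply,
    Finsupp.sum_mapDomain_index (h := fun i c => c • w' i) (fun _ => zero_smul ℕ _)
      (fun _ _ _ => add_smul _ _ _),
    map_finsuppSum]
  simp only [hw, map_nsmul]

section Letterplace

variable {K : Type*} [Field K] {Y : Type*}

attribute [local instance] weightedGradedAlgebra

lemma shift_zero (f : PL K Y) : shift K 0 f = f := by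
  have : (shiftVar 0 : Y × ℕ+ → Y × ℕ+) = id := funext fun p => Prod.ext rfl (PNat.eq rfl)
  rw [shift, this, rename_id, AlgHom.id_apply]

lemma shiftVar_comp (k k' : ℕ) :
    (shiftVar k' ∘ shiftVar k : Y × ℕ+ → Y × ℕ+) = shiftVar (k + k') :=
  funext fun _ => Prod.ext rfl (PNat.eq (add_assoc _ _ _))

lemma shift_shift (k k' : ℕ) (f : PL K Y) : shift K k' (shift K k f) = shift K (k + k') f := by
  rw [shift, shift, shift, rename_rename, shiftVar_comp]

lemma shift_monomial (k : ℕ) (m : (Y × ℕ+) →₀ ℕ) (c : K) :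
    shift K k (monomial m c) = monomial (shiftMon k m) c :=
  rename_monomial _ _ _

lemma shift_mem_nspan {S : Set (PL K Y)} (k : ℕ) {f : PL K Y} (hf : f ∈ S) :
    shift K k f ∈ nspan K S :=
  Ideal.subset_span ⟨k, f, hf, rfl⟩

lemma mem_nspan_of_mem {S : Set (PL K Y)} {f : PL K Y} (hf : f ∈ S) : f ∈ nspan K S :=
  shift_zero f ▸ shift_mem_nspan 0 hf

lemma nspan_isNIdeal (S : Set (PL K Y)) : IsNIdeal K (nspan K S) := by
  intro k f hf
  have hmap : shift K k f ∈ (nspan K S).map (shift K k) := Ideal.mem_map_of_mem _ hf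
  rw [nspan, Ideal.map_span] at hmap
  refine Ideal.span_le.2 ?_ hmap
  rintro _ ⟨_, ⟨k', g, hg, rfl⟩, rfl⟩
  exact shift_shift k' k g ▸ shift_mem_nspan (k' + k) hg

lemma nspan_le {S : Set (PL K Y)} {J : Ideal (PL K Y)} (hS : S ⊆ J) (hJ : IsNIdeal K J) :
    nspan K S ≤ J :=
  Ideal.span_le.2 fun _ ⟨k, f, hf, hg⟩ => hg ▸ hJ k f (hS hf)

lemma nspan_mono {S S' : Set (PL K Y)} (h : S ⊆ S') : nspan K S ≤ nspan K S' :=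
  Ideal.span_mono fun _ ⟨k, f, hf, hg⟩ => ⟨k, f, h hf, hg⟩

/-- The multidegree `χ_{[a+1, a+e]}` of `y₁(a+1) ⋯ yₑ(a+e)`. -/
noncomputable def intervalDeg (a e : ℕ) : ℕ+ →₀ ℕ :=
  Finsupp.ofSupportFinite (fun j => if a < (j : ℕ) ∧ (j : ℕ) ≤ a + e then 1 else 0) <|
    (Set.finite_Iic (⟨a + e + 1, Nat.succ_pos _⟩ : ℕ+)).subset fun j hj => by
      have := Function.mem_support.1 hj
      exact PNat.coe_le_coe _ _ |>.1 (by split_ifs at this <;> simp_all; omega)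

lemma intervalDeg_apply (a e : ℕ) (j : ℕ+) :
    intervalDeg a e j = if a < (j : ℕ) ∧ (j : ℕ) ≤ a + e then 1 else 0 := rfl

lemma intervalDeg_zero_right (a : ℕ) : intervalDeg a 0 = 0 := by
  ext j
  simp only [intervalDeg_apply, Finsupp.coe_zero, Pi.zero_apply]
  split_ifs <;> omega

lemma intervalDeg_succ (a e : ℕ) :
    intervalDeg a (e + 1) = Finsupp.single a.succPNat 1 + intervalDeg (a + 1) e := by
  classical
  ext j
  simp only [intervalDeg_apply, Finsupp.add_apply, Finsupp.single_apply, ← PNat.coe_inj,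
    Nat.succPNat_coe]
  split_ifs <;> omega

lemma intervalDeg_add (a b c : ℕ) :
    intervalDeg a (b + c) = intervalDeg a b + intervalDeg (a + b) c := by
  ext j
  simp only [intervalDeg_apply, Finsupp.add_apply]
  split_ifs <;> omega

lemma intervalDeg_injective (a : ℕ) : Function.Injective (intervalDeg a) := by
  intro e e' h
  have := DFunLike.congr_fun h (a + max e e' - 1).succPNat
  simp only [intervalDeg_apply, Nat.succPNat_coe, Nat.succ_eq_add_one] at this
  grind

lemma add_le_of_intervalDeg_le {k e d : ℕ} (he : e ≠ 0) (h : intervalDeg k e ≤ intervalDeg 0 d) :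
    k + e ≤ d := by
  have := h (k + (e - 1)).succPNat
  simp only [intervalDeg_apply, Nat.succPNat_coe, Nat.succ_eq_add_one] at this
  grind

lemma shiftMon_shiftMon (k k' : ℕ) (m : (Y × ℕ+) →₀ ℕ) :
    shiftMon k' (shiftMon k m) = shiftMon (k + k') m := by
  rw [shiftMon, shiftMon, shiftMon, ← Finsupp.mapDomain_comp, shiftVar_comp]

/-- `placeDeg` is the weighted degree for this weight, so multihomogeneity is Mathlib's
`IsWeightedHomogeneous placeWeight` and multihomogeneous components are its
`weightedHomogeneousComponent`s. -/
noncomputable def placeWeight (p : Y × ℕ+) : ℕ+ →₀ ℕ := Finsupp.single p.2 1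

lemma weight_placeWeight (m : (Y × ℕ+) →₀ ℕ) : Finsupp.weight placeWeight m = placeDeg m := by
  simp [Finsupp.weight_apply, placeWeight, placeDeg, Finsupp.mapDomain]

lemma isMultiHomog_iff {μ : ℕ+ →₀ ℕ} {f : PL K Y} :
    IsMultiHomog K μ f ↔ IsWeightedHomogeneous placeWeight f μ := by
  simp [IsMultiHomog, IsWeightedHomogeneous, weight_placeWeight]

lemma placeDeg_add (m n : (Y × ℕ+) →₀ ℕ) : placeDeg (m + n) = placeDeg m + placeDeg n :=
  Finsupp.mapDomain_add

lemma placeDeg_single (p : Y × ℕ+) (c : ℕ) : placeDeg (Finsupp.single p c) = Finsupp.single p.2 c :=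
  Finsupp.mapDomain_single

lemma eq_zero_of_placeDeg_eq_zero {m : (Y × ℕ+) →₀ ℕ} (h : placeDeg m = 0) : m = 0 := by
  ext p
  by_contra hp
  have := Finsupp.le_weight_of_ne_zero' placeWeight hp
  rw [weight_placeWeight, h, placeWeight, nonpos_iff_eq_zero] at this
  exact one_ne_zero (Finsupp.single_eq_zero.1 this)

lemma exists_single_le_of_placeDeg_ne_zero {m : (Y × ℕ+) →₀ ℕ} {j : ℕ+} (h : placeDeg m j ≠ 0) :
    ∃ y, Finsupp.single (y, j) 1 ≤ m := by
  classical
  obtain ⟨p, hp, rfl⟩ :=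
    Finset.mem_image.1 (Finsupp.mapDomain_support (Finsupp.mem_support_iff.2 h))
  exact ⟨p.1, Finsupp.single_le_iff.2 (Nat.one_le_iff_ne_zero.2 (Finsupp.mem_support_iff.1 hp))⟩

lemma wordExpAux_append (n : ℕ) (l₁ l₂ : List Y) :
    wordExpAux n (l₁ ++ l₂) = wordExpAux n l₁ + wordExpAux (n + l₁.length) l₂ := by
  induction l₁ generalizing n with
  | nil => simp [wordExpAux]
  | cons y l ih => simp only [List.cons_append, wordExpAux, ih, add_assoc, List.length_cons,
      Nat.add_comm 1]

lemma shiftMon_wordExpAux (k n : ℕ) (l : List Y) :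
    shiftMon k (wordExpAux n l) = wordExpAux (n + k) l := by
  induction l generalizing n with
  | nil => simp [wordExpAux, shiftMon]
  | cons y l ih =>
    rw [wordExpAux, wordExpAux, shiftMon, Finsupp.mapDomain_add, Finsupp.mapDomain_single,
      ← shiftMon, ih, Nat.add_right_comm]
    exact congrArg (Finsupp.single · 1 + _) (Prod.ext rfl (PNat.eq (Nat.add_right_comm _ _ _)))

lemma placeDeg_wordExpAux (n : ℕ) (l : List Y) :
    placeDeg (wordExpAux n l) = intervalDeg n l.length := by
  induction l generalizing n with
  | nil => simp [wordExpAux, placeDeg, intervalDeg_zero_right]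
  | cons y l ih =>
    rw [wordExpAux, placeDeg_add, placeDeg_single, ih, List.length_cons, intervalDeg_succ]
    rfl

lemma wordExp_mul (u w : FreeMonoid Y) :
    wordExp (u * w) = wordExp u + shiftMon (FreeMonoid.length u) (wordExp w) := by
  rw [wordExp, wordExp, wordExp, FreeMonoid.toList_mul, wordExpAux_append, shiftMon_wordExpAux]
  rfl

lemma placeDeg_shiftMon_wordExp (k : ℕ) (w : FreeMonoid Y) :
    placeDeg (shiftMon k (wordExp w)) = intervalDeg k (FreeMonoid.length w) := by
  rw [wordExp, shiftMon_wordExpAux, zero_add, placeDeg_wordExpAux]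
  rfl

lemma placeDeg_wordExp (w : FreeMonoid Y) :
    placeDeg (wordExp w) = intervalDeg 0 (FreeMonoid.length w) := by
  rw [wordExp, placeDeg_wordExpAux]
  rfl

lemma wordExpAux_injective (n : ℕ) : Function.Injective (wordExpAux (Y := Y) n) := by
  intro l l' h
  induction l generalizing n l' with
  | nil =>
    have := congrArg placeDeg h
    rw [placeDeg_wordExpAux, placeDeg_wordExpAux] at this
    exact (List.length_eq_zero_iff.1 (intervalDeg_injective n this).symm).symm
  | cons y l ih =>
    cases l' with
    | nil =>
      have := congrArg placeDeg h
      rw [placeDeg_wordExpAux, placeDeg_wordExpAux] at this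
      simpa using intervalDeg_injective n this
    | cons z l' =>
      have hyz : y = z := by
        by_contra hyz
        have hle : Finsupp.single (y, n.succPNat) 1 ≤ wordExpAux n (z :: l') :=
          h ▸ le_self_add
        have hz : wordExpAux (n + 1) l' (y, n.succPNat) = 0 := by
          by_contra hne
          have := Finsupp.le_weight_of_ne_zero' placeWeight hne
          rw [weight_placeWeight, placeDeg_wordExpAux, placeWeight] at this
          have := this n.succPNat
          simp [intervalDeg_apply] at this
        have := hle (y, n.succPNat)
        classical
        rw [Finsupp.single_eq_same, wordExpAux, Finsupp.add_apply, hz, add_zero,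
          Finsupp.single_apply, if_neg (fun h => hyz (congrArg Prod.fst h).symm)] at this
        exact absurd this (by decide)
      subst hyz
      rw [ih (n + 1) (add_left_cancel h)]

lemma wordExp_injective : Function.Injective (wordExp (Y := Y)) :=
  fun _ _ h => FreeMonoid.toList.injective (wordExpAux_injective 0 h)

lemma exists_wordExpAux_add (e : ℕ) {a : ℕ} {m : (Y × ℕ+) →₀ ℕ} {ν : ℕ+ →₀ ℕ}
    (h : placeDeg m = intervalDeg a e + ν) :
    ∃ l m', l.length = e ∧ m = wordExpAux a l + m' ∧ placeDeg m' = ν := by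
  induction e generalizing a m with
  | zero => exact ⟨[], m, rfl, by simp [wordExpAux], by simpa [intervalDeg_zero_right] using h⟩
  | succ e ih =>
    rw [intervalDeg_succ, add_assoc] at h
    obtain ⟨y, hy⟩ := exists_single_le_of_placeDeg_ne_zero (m := m) (j := a.succPNat) (by simp [h])
    obtain ⟨m₀, rfl⟩ := exists_add_of_le hy
    rw [placeDeg_add, placeDeg_single] at h
    obtain ⟨l, m', rfl, rfl, hm'⟩ := ih (add_left_cancel h)
    exact ⟨y :: l, m', rfl, by rw [wordExpAux, add_assoc]; rfl, hm'⟩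

lemma exists_wordExpAux {a e : ℕ} {m : (Y × ℕ+) →₀ ℕ} (h : placeDeg m = intervalDeg a e) :
    ∃ l, l.length = e ∧ m = wordExpAux a l := by
  obtain ⟨l, m', hl, rfl, hm'⟩ := exists_wordExpAux_add e (ν := 0) (by rw [h, add_zero])
  exact ⟨l, hl, by rw [eq_zero_of_placeDeg_eq_zero hm', add_zero]⟩

lemma exists_wordExp_add_shiftMon {k e r : ℕ} {m : (Y × ℕ+) →₀ ℕ}
    (h : placeDeg m + intervalDeg k e = intervalDeg 0 (k + e + r)) :
    ∃ u v : FreeMonoid Y, FreeMonoid.length u = k ∧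
      m = wordExp u + shiftMon (k + e) (wordExp v) := by
  rw [intervalDeg_add, intervalDeg_add, zero_add, add_right_comm] at h
  obtain ⟨l₁, m', hl₁, rfl, hm'⟩ := exists_wordExpAux_add k (add_right_cancel h)
  obtain ⟨l₂, -, rfl⟩ := exists_wordExpAux hm'
  refine ⟨FreeMonoid.ofList l₁, FreeMonoid.ofList l₂, hl₁, ?_⟩
  rw [wordExp, wordExp, shiftMon_wordExpAux, zero_add]
  rfl

/-- `iota K` as a linear map; the two agree definitionally. -/
noncomputable def iotaLinearMap : FA K Y →ₗ[K] PL K Y :=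
  Finsupp.lsum K (fun w => monomial (wordExp w)) ∘ₗ
    (MonoidAlgebra.coeffLinearEquiv K).toLinearMap

lemma iota_zero : iota K (0 : FA K Y) = 0 := map_zero (iotaLinearMap (K := K) (Y := Y))

lemma iota_add (f g : FA K Y) : iota K (f + g) = iota K f + iota K g := map_add iotaLinearMap f g

lemma iota_neg (f : FA K Y) : iota K (-f) = -iota K f := map_neg iotaLinearMap f

lemma iota_sum {A : Type*} (s : Finset A) (f : A → FA K Y) :
    iota K (∑ a ∈ s, f a) = ∑ a ∈ s, iota K (f a) := map_sum iotaLinearMap f s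

lemma iota_eq_sum (f : FA K Y) :
    iota K f = ∑ w ∈ f.coeff.support, monomial (wordExp w) (f.coeff w) := rfl

lemma iota_single (w : FreeMonoid Y) (c : K) :
    iota K (MonoidAlgebra.single w c) = monomial (wordExp w) c :=
  Finsupp.sum_single_index (map_zero _)

lemma shift_iota (k : ℕ) (f : FA K Y) :
    shift K k (iota K f) =
      ∑ w ∈ f.coeff.support, monomial (shiftMon k (wordExp w)) (f.coeff w) := by
  rw [iota_eq_sum, map_sum]
  simp only [shift_monomial]

lemma isWeightedHomogeneous_shift_iota {e : ℕ} {f : FA K Y} (hf : IsHomog K e f) (k : ℕ) :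
    IsWeightedHomogeneous placeWeight (shift K k (iota K f)) (intervalDeg k e) := by
  rw [shift_iota]
  refine IsWeightedHomogeneous.sum _ _ _ fun w hw => isWeightedHomogeneous_monomial _ _ _ ?_
  rw [weight_placeWeight, placeDeg_shiftMon_wordExp, hf w hw]

lemma isWeightedHomogeneous_iota {e : ℕ} {f : FA K Y} (hf : IsHomog K e f) :
    IsWeightedHomogeneous placeWeight (iota K f) (intervalDeg 0 e) :=
  shift_zero (iota K f) ▸ isWeightedHomogeneous_shift_iota hf 0

lemma shift_iota_of_isHomog_zero {f : FA K Y} (hf : IsHomog K 0 f) (k : ℕ) :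
    shift K k (iota K f) = iota K f := by
  rw [shift_iota, iota_eq_sum]
  refine Finset.sum_congr rfl fun w hw => ?_
  rw [FreeMonoid.length_eq_zero.1 (hf w hw)]
  rfl

lemma iota_single_mul (u : FreeMonoid Y) (c : K) (f : FA K Y) :
    iota K (MonoidAlgebra.single u c * f) =
      monomial (wordExp u) c * shift K (FreeMonoid.length u) (iota K f) := by
  induction f using MonoidAlgebra.induction_linear with
  | zero => simp [iota_zero]
  | add f g hf hg => rw [mul_add, iota_add, iota_add, map_add, mul_add, hf, hg]
  | single w c' =>
    rw [MonoidAlgebra.single_mul_single, iota_single, iota_single, shift_monomial, monomial_mul,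
      wordExp_mul]

lemma iota_mul_single {e : ℕ} {f : FA K Y} (hf : IsHomog K e f) (v : FreeMonoid Y) (c : K) :
    iota K (f * MonoidAlgebra.single v c) = iota K f * monomial (shiftMon e (wordExp v)) c := by
  conv_lhs => rw [← MonoidAlgebra.sum_coeff_single f]
  rw [Finsupp.sum, Finset.sum_mul, iota_sum, iota_eq_sum, Finset.sum_mul]
  refine Finset.sum_congr rfl fun w hw => ?_
  rw [MonoidAlgebra.single_mul_single, iota_single, wordExp_mul, hf w hw, monomial_mul]

/-- The left inverse of `ι` that keeps exactly the coefficients of the multilinear monomials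
`wordExp w`. -/
noncomputable def iotaRetraction : PL K Y →ₗ[K] FA K Y :=
  (MonoidAlgebra.coeffLinearEquiv K).symm.toLinearMap ∘ₗ
    Finsupp.lcomapDomain wordExp wordExp_injective ∘ₗ
      (AddMonoidAlgebra.coeffLinearEquiv K).toLinearMap

lemma coeff_iotaRetraction (p : PL K Y) (w : FreeMonoid Y) :
    (iotaRetraction p).coeff w = coeff (wordExp w) p := rfl

lemma iotaRetraction_iota (f : FA K Y) : iotaRetraction (iota K f) = f := by
  induction f using MonoidAlgebra.induction_linear with
  | zero => rw [iota_zero, map_zero]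
  | add f g hf hg => rw [iota_add, map_add, hf, hg]
  | single w c =>
    ext w'
    classical
    rw [coeff_iotaRetraction, iota_single, coeff_monomial, MonoidAlgebra.coeff_single,
      Finsupp.single_apply]
    exact if_congr wordExp_injective.eq_iff rfl rfl

lemma iotaRetraction_eq_zero {p : PL K Y} {μ : ℕ+ →₀ ℕ}
    (hp : IsWeightedHomogeneous placeWeight p μ) (hμ : ∀ d, intervalDeg 0 d ≠ μ) :
    iotaRetraction p = 0 := by
  ext w
  rw [coeff_iotaRetraction, hp.coeff_eq_zero]
  · rfl
  · rw [weight_placeWeight, placeDeg_wordExp]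
    exact hμ _

lemma coeff_homComp_s18 (d : ℕ) (f : FA K Y) (w : FreeMonoid Y) :
    (homComp K d f).coeff w = if FreeMonoid.length w = d then f.coeff w else 0 := by
  classical
  rw [homComp, MonoidAlgebra.coeff_sum, Finsupp.finsetSum_apply]
  simp only [MonoidAlgebra.coeff_single, Finsupp.single_apply, Finset.sum_ite_eq',
    Finset.mem_filter, Finsupp.mem_support_iff]
  by_cases hw : f.coeff w = 0 <;> simp [hw]

lemma isHomog_homComp (d : ℕ) (f : FA K Y) : IsHomog K d (homComp K d f) := by
  intro w hw
  rw [Finsupp.mem_support_iff, coeff_homComp_s18] at hw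
  by_contra h
  exact hw (if_neg h)

lemma sum_homComp (f : FA K Y) : ∑ d ∈ Finset.range (degF K f + 1), homComp K d f = f := by
  conv_rhs => rw [← MonoidAlgebra.sum_coeff_single f]
  rw [Finsupp.sum, ← Finset.sum_fiberwise_of_maps_to (g := FreeMonoid.length)
    (t := Finset.range (degF K f + 1))]
  · rfl
  · exact fun w hw => Finset.mem_range_succ_iff.2 (Finset.le_sup hw)

lemma iota_homComp (d : ℕ) (f : FA K Y) :
    iota K (homComp K d f) =
      weightedHomogeneousComponent placeWeight (intervalDeg 0 d) (iota K f) := by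
  classical
  rw [homComp, iota_sum, iota_eq_sum, map_sum, Finset.sum_filter]
  refine Finset.sum_congr rfl fun w _ => ?_
  rw [iota_single, weightedHomogeneousComponent_of_mem (n := intervalDeg 0 (FreeMonoid.length w))
    ((mem_weightedHomogeneousSubmodule _ _ _ _).2 (isWeightedHomogeneous_monomial _ _ _
      (by rw [weight_placeWeight, placeDeg_wordExp])))]
  exact if_congr (by rw [(intervalDeg_injective 0).eq_iff, eq_comm]) rfl rfl

lemma exists_isWeightedHomogeneous_shift {p : PL K Y} {μ : ℕ+ →₀ ℕ}
    (hp : IsWeightedHomogeneous placeWeight p μ) (k : ℕ) :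
    ∃ μ', IsWeightedHomogeneous placeWeight (shift K k p) μ' := by
  refine ⟨_, hp.rename (Finsupp.mapDomain.addMonoidHom fun j : ℕ+ => (shiftVar k (j, j)).2) ?_⟩
  intro p
  rw [Finsupp.mapDomain.addMonoidHom_apply, placeWeight, placeWeight, Finsupp.mapDomain_single]
  rfl

lemma IsLPIdeal.isHomogeneous {J : Ideal (PL K Y)} (hJ : IsLPIdeal K J) :
    J.IsHomogeneous (weightedHomogeneousSubmodule K placeWeight) := by
  rw [hJ.2]
  refine Ideal.homogeneous_span _ _ ?_
  rintro _ ⟨k, f, ⟨-, -, μ, hμ⟩, rfl⟩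
  obtain ⟨μ', hμ'⟩ := exists_isWeightedHomogeneous_shift (isMultiHomog_iff.1 hμ) k
  exact ⟨μ', (mem_weightedHomogeneousSubmodule _ _ _ _).2 hμ'⟩

lemma iota_mul_mem_of_isNIdeal {J : Ideal (PL K Y)} (hJ : IsNIdeal K J) (g : FA K Y) {f : FA K Y}
    (hf : iota K f ∈ J) : iota K (g * f) ∈ J := by
  induction g using MonoidAlgebra.induction_linear with
  | zero => rw [zero_mul, iota_zero]; exact J.zero_mem
  | add g g' hg hg' => rw [add_mul, iota_add]; exact J.add_mem hg hg'
  | single u c => rw [iota_single_mul]; exact J.mul_mem_left _ (hJ _ _ hf)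

lemma iota_homComp_mem {J : Ideal (PL K Y)}
    (hJ : J.IsHomogeneous (weightedHomogeneousSubmodule K placeWeight)) {f : FA K Y}
    (hf : iota K f ∈ J) (d : ℕ) : iota K (homComp K d f) ∈ J := by
  classical
  rw [iota_homComp]
  exact weightedHomogeneousComponent_mem_of_mem K placeWeight hJ hf _

lemma iota_mul_mem_of_isHomogeneous {J : Ideal (PL K Y)}
    (hJ : J.IsHomogeneous (weightedHomogeneousSubmodule K placeWeight)) {f : FA K Y}
    (hf : iota K f ∈ J) (g : FA K Y) : iota K (f * g) ∈ J := by
  rw [← sum_homComp f, Finset.sum_mul, iota_sum]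
  refine J.sum_mem fun d _ => ?_
  induction g using MonoidAlgebra.induction_linear with
  | zero => rw [mul_zero, iota_zero]; exact J.zero_mem
  | add g g' hg hg' => rw [mul_add, iota_add]; exact J.add_mem hg hg'
  | single v c =>
    rw [iota_mul_single (isHomog_homComp d f)]
    exact J.mul_mem_right _ (iota_homComp_mem hJ hf d)

lemma exists_twoSidedIdeal_coe_eq_preimage {J : Ideal (PL K Y)} (hJ : IsLPIdeal K J) :
    ∃ I : TwoSidedIdeal (FA K Y), (I : Set (FA K Y)) = iota K ⁻¹' J ∧ IsGradedF K I := by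
  refine ⟨TwoSidedIdeal.mk' (iota K ⁻¹' J) (by simp [iota_zero])
    (fun ha hb => by simpa [iota_add] using J.add_mem ha hb)
    (fun ha => by simpa [iota_neg] using J.neg_mem ha)
    (fun hb => iota_mul_mem_of_isNIdeal hJ.1 _ hb)
    (fun ha => iota_mul_mem_of_isHomogeneous hJ.isHomogeneous ha _), TwoSidedIdeal.coe_mk' .., ?_⟩
  intro f hf d
  rw [TwoSidedIdeal.mem_mk'] at hf ⊢
  exact iota_homComp_mem hJ.isHomogeneous hf d

lemma nspan_iota_le_nspan_iota_homog {I : TwoSidedIdeal (FA K Y)} (hI : IsGradedF K I) :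
    nspan K (iota K '' (I : Set (FA K Y))) ≤
      nspan K (iota K '' {g | g ∈ I ∧ ∃ e, IsHomog K e g}) := by
  refine nspan_le ?_ (nspan_isNIdeal _)
  rintro _ ⟨f, hf, rfl⟩
  rw [← sum_homComp f, iota_sum]
  exact Ideal.sum_mem _ fun d _ => mem_nspan_of_mem ⟨_, ⟨hI f hf d, d, isHomog_homComp d f⟩, rfl⟩

lemma isLPIdeal_nspan_iota {I : TwoSidedIdeal (FA K Y)} (hI : IsGradedF K I) :
    IsLPIdeal K (nspan K (iota K '' (I : Set (FA K Y)))) := by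
  refine ⟨nspan_isNIdeal _, le_antisymm ((nspan_iota_le_nspan_iota_homog hI).trans
    (nspan_mono ?_)) (nspan_le Set.inter_subset_left (nspan_isNIdeal _))⟩
  rintro _ ⟨g, ⟨hg, e, hge⟩, rfl⟩
  exact ⟨mem_nspan_of_mem ⟨g, hg, rfl⟩, ⟨g, rfl⟩, _,
    isMultiHomog_iff.2 (isWeightedHomogeneous_iota hge)⟩

lemma monomial_mul_shift_iota {e k : ℕ} {g : FA K Y} (hg : IsHomog K e g) {u : FreeMonoid Y}
    (hu : FreeMonoid.length u = k) (v : FreeMonoid Y) (c : K) :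
    monomial (wordExp u + shiftMon (k + e) (wordExp v)) c * shift K k (iota K g) =
      iota K (MonoidAlgebra.single u c * g * MonoidAlgebra.single v 1) := by
  rw [mul_assoc, iota_single_mul, hu, iota_mul_single hg, map_mul, shift_monomial,
    shiftMon_shiftMon, add_comm e k, ← mul_one c, ← monomial_mul, mul_one]
  ring

lemma iotaRetraction_monomial_mul_shift_iota_mem {I : TwoSidedIdeal (FA K Y)} {e : ℕ}
    {g : FA K Y} (hg : g ∈ I) (hge : IsHomog K e g) (m : (Y × ℕ+) →₀ ℕ) (c : K) (k : ℕ) :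
    iotaRetraction (monomial m c * shift K k (iota K g)) ∈ I := by
  by_cases hμ : ∃ d, intervalDeg 0 d = placeDeg m + intervalDeg k e
  · obtain ⟨d, hd⟩ := hμ
    obtain ⟨k', r, hk', hr⟩ : ∃ k' r, shift K k (iota K g) = shift K k' (iota K g) ∧
        placeDeg m + intervalDeg k' e = intervalDeg 0 (k' + e + r) := by
      rcases eq_or_ne e 0 with rfl | he
      -- a constant `g` is fixed by all shifts, so `k` may be replaced by `0 ≤ d`
      · refine ⟨0, d, by rw [shift_iota_of_isHomog_zero hge, shift_zero], ?_⟩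
        rw [intervalDeg_zero_right, add_zero] at hd ⊢
        rw [zero_add, zero_add, hd]
      · have hle := add_le_of_intervalDeg_le he (hd ▸ le_add_self)
        exact ⟨k, d - (k + e), rfl, by rw [Nat.add_sub_cancel' hle, hd]⟩
    obtain ⟨u, v, hu, rfl⟩ := exists_wordExp_add_shiftMon hr
    rw [hk', monomial_mul_shift_iota hge hu, iotaRetraction_iota]
    exact I.mul_mem_right _ _ (I.mul_mem_left _ _ hg)
  · push Not at hμ
    rw [iotaRetraction_eq_zero ((isWeightedHomogeneous_monomial _ _ _ (weight_placeWeight m)).mul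
      (isWeightedHomogeneous_shift_iota hge k)) hμ]
    exact I.zero_mem

lemma iotaRetraction_mem_of_mem_nspan {I : TwoSidedIdeal (FA K Y)} {p : PL K Y}
    (hp : p ∈ nspan K (iota K '' {g | g ∈ I ∧ ∃ e, IsHomog K e g})) : iotaRetraction p ∈ I := by
  suffices ∀ q, iotaRetraction (q * p) ∈ I by simpa using this 1
  induction hp using Submodule.span_induction with
  | mem x hx =>
    obtain ⟨k, _, ⟨g, ⟨hg, e, hge⟩, rfl⟩, rfl⟩ := hx
    intro q
    induction q using MvPolynomial.induction_on' with
    | monomial m c => exact iotaRetraction_monomial_mul_shift_iota_mem hg hge m c k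
    | add q q' hq hq' => rw [add_mul, map_add]; exact I.add_mem hq hq'
  | zero => simp [I.zero_mem]
  | add x y _ _ hx hy => intro q; rw [mul_add, map_add]; exact I.add_mem (hx q) (hy q)
  | smul a x _ hx => intro q; rw [smul_eq_mul, ← mul_assoc]; exact hx _

lemma preimage_nspan_iota {I : TwoSidedIdeal (FA K Y)} (hI : IsGradedF K I) :
    iota K ⁻¹' ((nspan K (iota K '' (I : Set (FA K Y))) : Set (PL K Y)) ∩ Set.range (iota K)) =
      (I : Set (FA K Y)) := by
  ext f
  refine ⟨fun hf => ?_, fun hf => ⟨mem_nspan_of_mem ⟨f, hf, rfl⟩, f, rfl⟩⟩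
  rw [← iotaRetraction_iota f]
  exact iotaRetraction_mem_of_mem_nspan (nspan_iota_le_nspan_iota_homog hI hf.1)

lemma nspan_iota_preimage {J : Ideal (PL K Y)} (hJ : IsLPIdeal K J) :
    nspan K (iota K '' (iota K ⁻¹' ((J : Set (PL K Y)) ∩ Set.range (iota K)))) = J := by
  rw [Set.image_preimage_eq_inter_range, Set.inter_assoc, Set.inter_self]
  refine le_antisymm (nspan_le Set.inter_subset_left hJ.1) ?_
  calc J = nspan K ((J : Set (PL K Y)) ∩ Lset K) := hJ.2
    _ ≤ _ := nspan_mono (Set.inter_subset_inter_right _ fun _ hp => hp.1)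

end Letterplace

theorem statement_18_general (K : Type*) [Field K] (X : Type*) :
    (∀ I : TwoSidedIdeal (FA K X), IsGradedF K I →
        IsLPIdeal K (nspan K (iota K '' (I : Set (FA K X))))) ∧
    (∀ J : Ideal (PL K X), IsLPIdeal K J →
        ∃ I : TwoSidedIdeal (FA K X),
          (I : Set (FA K X)) = iota K ⁻¹' ((J : Set (PL K X)) ∩ Set.range (iota K)) ∧
          IsGradedF K I) ∧
    (∀ I : TwoSidedIdeal (FA K X), IsGradedF K I →
        iota K ⁻¹' ((nspan K (iota K '' (I : Set (FA K X))) : Set (PL K X)) ∩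
          Set.range (iota K)) = (I : Set (FA K X))) ∧
    (∀ J : Ideal (PL K X), IsLPIdeal K J →
        nspan K (iota K '' (iota K ⁻¹' ((J : Set (PL K X)) ∩ Set.range (iota K)))) = J) := by
  refine ⟨fun I hI => isLPIdeal_nspan_iota hI, fun J hJ => ?_,
    fun I hI => preimage_nspan_iota hI, fun J hJ => nspan_iota_preimage hJ⟩
  rw [Set.preimage_inter_range]
  exact exists_twoSidedIdeal_coe_eq_preimage hJ

/-- The letterplace correspondence: `I ↦ ⟨ι(I)⟩_ℕ` maps graded two-sided
ideals of `F` to letterplace ideals of `P`, `J ↦ ι⁻¹(J ∩ V)` maps letterplace ideals of `P` to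
graded two-sided ideals of `F`, and these two assignments are mutually inverse bijections. -/
theorem statement_18 (K : Type*) [Field K] (X : Type*) [Countable X] :
    (∀ I : TwoSidedIdeal (FA K X), IsGradedF K I →
        IsLPIdeal K (nspan K (iota K '' (I : Set (FA K X))))) ∧
    (∀ J : Ideal (PL K X), IsLPIdeal K J →
        ∃ I : TwoSidedIdeal (FA K X),
          (I : Set (FA K X)) = iota K ⁻¹' ((J : Set (PL K X)) ∩ Set.range (iota K)) ∧
          IsGradedF K I) ∧
    (∀ I : TwoSidedIdeal (FA K X), IsGradedF K I →
        iota K ⁻¹' ((nspan K (iota K '' (I : Set (FA K X))) : Set (PL K X)) ∩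
          Set.range (iota K)) = (I : Set (FA K X))) ∧
    (∀ J : Ideal (PL K X), IsLPIdeal K J →
        nspan K (iota K '' (iota K ⁻¹' ((J : Set (PL K X)) ∩ Set.range (iota K)))) = J) :=
  statement_18_general K X
end
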